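/- arXiv:2306.05986 — 9 statements merged into one kernel-verified Lean document; each statement's English description precedes it below -/
import Mathlib

section
/- Let f : 2^N → ℤ be a normalized supermodular function on a finite set N, with M-convex set B̈ = {x ∈ ℤ^N : x(N)=f(N), x(X) ≥ f(X) for all X ⊆ N}. For any x, y ∈ B̈ and any X ⊆ N with x(X) > y(X), there exist i ∈ X and j ∈ N \ X such that x − χ_i + χ_j ∈ B̈. -/
open Finset

/-- The M-convex set (set of integer points of the base-polyhedron) of an
integer-valued supermodular function. -/
def MSet {N : Type*} [Fintype N] (f : Finset N → ℤ) : Set (N → ℤ) :=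
  {x | (∑ i, x i) = f Finset.univ ∧ ∀ X : Finset N, f X ≤ ∑ i ∈ X, x i}

/-- exchange across a set where `x` exceeds `y`. -/
theorem stmt_1 {N : Type*} [Fintype N] [DecidableEq N]
    (f : Finset N → ℤ)
    (hsuper : ∀ X Y : Finset N, f X + f Y ≤ f (X ∪ Y) + f (X ∩ Y))
    (hf0 : f ∅ = 0)
    (x y : N → ℤ) (hx : x ∈ MSet f) (hy : y ∈ MSet f)
    (X : Finset N) (hXY : ∑ i ∈ X, y i < ∑ i ∈ X, x i) :
    ∃ i ∈ X, ∃ j ∉ X,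
      (fun k => x k - (if k = i then 1 else 0) + (if k = j then 1 else 0)) ∈ MSet f := by
  classical
  obtain ⟨hx1, hx2⟩ := hx
  obtain ⟨hy1, hy2⟩ := hy
  -- tight sets are closed under union and intersection
  have hTui : ∀ A B : Finset N, (∑ a ∈ A, x a = f A) → (∑ a ∈ B, x a = f B) →
      (∑ a ∈ A ∪ B, x a = f (A ∪ B)) ∧ (∑ a ∈ A ∩ B, x a = f (A ∩ B)) := by
    intro A B hA hB
    have hsum : ∑ a ∈ A ∪ B, x a + ∑ a ∈ A ∩ B, x a = ∑ a ∈ A, x a + ∑ a ∈ B, x a :=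
      Finset.sum_union_inter
    have h1 := hsuper A B
    have h2 := hx2 (A ∪ B)
    have h3 := hx2 (A ∩ B)
    omega
  -- minimal tight set containing i
  set D : N → Finset N := fun i =>
    ((Finset.univ : Finset (Finset N)).filter
      fun S => (∑ a ∈ S, x a = f S) ∧ i ∈ S).inf id with hD
  have inf_lemma : ∀ (F : Finset (Finset N)) (i : N),
      (∀ S ∈ F, (∑ a ∈ S, x a = f S) ∧ i ∈ S) →
      (∑ a ∈ F.inf id, x a = f (F.inf id)) ∧ i ∈ F.inf id := by
    intro F i
    induction F using Finset.cons_induction with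
    | empty =>
      intro _
      simp only [Finset.inf_empty, Finset.top_eq_univ]
      exact ⟨hx1, Finset.mem_univ i⟩
    | cons a F ha ih =>
      intro h
      have h1 := h a (Finset.mem_cons_self a F)
      have h2 := ih fun S hS => h S (Finset.mem_cons_of_mem hS)
      rw [Finset.inf_cons]
      have heq : (id a ⊓ F.inf id) = a ∩ F.inf id := rfl
      rw [heq]
      exact ⟨(hTui a (F.inf id) h1.1 h2.1).2, Finset.mem_inter.mpr ⟨h1.2, h2.2⟩⟩
  have hDspec : ∀ i, (∑ a ∈ D i, x a = f (D i)) ∧ i ∈ D i := by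
    intro i
    apply inf_lemma
    intro S hS
    exact (Finset.mem_filter.mp hS).2
  have hDle : ∀ i (S : Finset N), (∑ a ∈ S, x a = f S) → i ∈ S → D i ⊆ S := by
    intro i S hS hiS
    have hmem : S ∈ ((Finset.univ : Finset (Finset N)).filter
        fun S => (∑ a ∈ S, x a = f S) ∧ i ∈ S) :=
      Finset.mem_filter.mpr ⟨Finset.mem_univ S, hS, hiS⟩
    exact Finset.inf_le (f := id) hmem
  -- unions of tight sets are tight
  have sup_lemma : ∀ (Y : Finset N), (∀ i ∈ Y, ∑ a ∈ D i, x a = f (D i)) →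
      ∑ a ∈ Y.sup D, x a = f (Y.sup D) := by
    intro Y
    induction Y using Finset.cons_induction with
    | empty => intro _; simp [hf0]
    | cons a Y ha ih =>
      intro h
      have h1 := h a (Finset.mem_cons_self a Y)
      have h2 := ih fun i hi => h i (Finset.mem_cons_of_mem hi)
      rw [Finset.sup_cons]
      have heq : (D a ⊔ Y.sup D) = D a ∪ Y.sup D := rfl
      rw [heq]
      exact (hTui _ _ h1 h2).1
  -- there is i in X whose dependence set escapes X
  have hex : ∃ i ∈ X, ¬ D i ⊆ X := by
    by_contra h
    push_neg at h
    have hXeq : X = X.sup D := by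
      apply Finset.Subset.antisymm
      · intro i hi
        exact Finset.mem_of_subset (Finset.le_sup hi) (hDspec i).2
      · exact Finset.sup_le fun i hi => h i hi
    have htX : ∑ a ∈ X, x a = f X := by
      rw [hXeq]
      exact sup_lemma X fun i _ => (hDspec i).1
    have := hy2 X
    omega
  obtain ⟨i, hiX, hnsub⟩ := hex
  obtain ⟨j, hjD, hjX⟩ := Finset.not_subset.mp hnsub
  refine ⟨i, hiX, j, hjX, ?_, ?_⟩
  · -- total sum preserved
    have hsplit : ∑ k, (x k - (if k = i then 1 else 0) + (if k = j then 1 else 0))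
        = (∑ k, x k) - (∑ k : N, if k = i then (1:ℤ) else 0)
          + (∑ k : N, if k = j then (1:ℤ) else 0) := by
      rw [Finset.sum_add_distrib, Finset.sum_sub_distrib]
    rw [hsplit]
    simp [Finset.sum_ite_eq', hx1]
  · intro S
    have hsplit : ∑ k ∈ S, (x k - (if k = i then 1 else 0) + (if k = j then 1 else 0))
        = (∑ k ∈ S, x k) - (∑ k ∈ S, if k = i then (1:ℤ) else 0)
          + (∑ k ∈ S, if k = j then (1:ℤ) else 0) := by
      rw [Finset.sum_add_distrib, Finset.sum_sub_distrib]
    rw [hsplit, Finset.sum_ite_eq' S i, Finset.sum_ite_eq' S j]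
    have hfS := hx2 S
    by_cases hiS : i ∈ S
    · by_cases hjS : j ∈ S
      · simp [hiS, hjS]; omega
      · -- S contains i but not j : S is not tight
        have hnt : ∑ a ∈ S, x a ≠ f S := by
          intro ht
          exact hjS (hDle i S ht hiS hjD)
        simp [hiS, hjS]
        omega
    · by_cases hjS : j ∈ S <;> simp [hiS, hjS] <;> omega
end

section
/- Let f : 2^N → ℤ be a normalized supermodular function with M-convex set B̈. For any x ∈ B̈ and disjoint subsets I, J ⊆ N such that x(J) < f(I∪J) − f(I), there exist i ∈ I and j ∈ J such that x − χ_i + χ_j ∈ B̈. -/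
open Finset

/-- exchange between disjoint sets `I` and `J` when `x(J) < f(I∪J) − f(I)`. -/
theorem stmt_2 {N : Type*} [Fintype N] [DecidableEq N]
    (f : Finset N → ℤ)
    (hsuper : ∀ X Y : Finset N, f X + f Y ≤ f (X ∪ Y) + f (X ∩ Y))
    (hf0 : f ∅ = 0)
    (x : N → ℤ) (hx : x ∈ MSet f)
    (I J : Finset N) (hIJ : Disjoint I J)
    (hlt : ∑ i ∈ J, x i < f (I ∪ J) - f I) :
    ∃ i ∈ I, ∃ j ∈ J,
      (fun k => x k - (if k = i then 1 else 0) + (if k = j then 1 else 0)) ∈ MSet f := by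
  classical
  obtain ⟨hxs, hxb⟩ := hx
  -- nonemptiness
  have hIne : I.Nonempty := by
    rcases I.eq_empty_or_nonempty with h | h
    · exfalso; rw [h, Finset.empty_union, hf0] at hlt
      have := hxb J; linarith
    · exact h
  have hJne : J.Nonempty := by
    rcases J.eq_empty_or_nonempty with h | h
    · exfalso; rw [h, Finset.union_empty, Finset.sum_empty] at hlt; linarith
    · exact h
  -- tight sets are closed under union and intersection
  have tun : ∀ A B : Finset N, (∑ k ∈ A, x k = f A) → (∑ k ∈ B, x k = f B) →
      (∑ k ∈ A ∪ B, x k = f (A ∪ B)) ∧ (∑ k ∈ A ∩ B, x k = f (A ∩ B)) := by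
    intro A B hA hB
    have h1 := hxb (A ∪ B)
    have h2 := hxb (A ∩ B)
    have h3 := hsuper A B
    have h4 : ∑ k ∈ A ∪ B, x k + ∑ k ∈ A ∩ B, x k = ∑ k ∈ A, x k + ∑ k ∈ B, x k :=
      Finset.sum_union_inter
    constructor <;> linarith
  by_contra hcon
  push_neg at hcon
  -- for each i ∈ I, j ∈ J, get a tight set containing i and avoiding j
  have key : ∀ i j : N, ∃ X : Finset N, i ∈ I → j ∈ J →
      (∑ k ∈ X, x k = f X) ∧ i ∈ X ∧ j ∉ X := by
    intro i j
    by_cases hi : i ∈ I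
    · by_cases hj : j ∈ J
      · by_contra hX
        have hX' : ∀ X : Finset N, (∑ k ∈ X, x k = f X) → i ∈ X → j ∈ X := by
          intro X h1 h2
          by_contra h3
          exact hX ⟨X, fun _ _ => ⟨h1, h2, h3⟩⟩
        apply hcon i hi j hj
        constructor
        · have : ∑ k, (x k - (if k = i then 1 else 0) + (if k = j then 1 else 0))
              = (∑ k, x k) - (if i ∈ (Finset.univ : Finset N) then (1:ℤ) else 0)
                + (if j ∈ (Finset.univ : Finset N) then (1:ℤ) else 0) := by
            rw [Finset.sum_add_distrib, Finset.sum_sub_distrib,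
              Finset.sum_ite_eq' Finset.univ i (fun _ => (1:ℤ)),
              Finset.sum_ite_eq' Finset.univ j (fun _ => (1:ℤ))]
          simp only [this, Finset.mem_univ, if_true]
          rw [hxs]; ring
        · intro X
          have hb := hxb X
          have hsum : ∑ k ∈ X, (x k - (if k = i then 1 else 0) + (if k = j then 1 else 0))
              = (∑ k ∈ X, x k) - (if i ∈ X then (1:ℤ) else 0)
                + (if j ∈ X then (1:ℤ) else 0) := by
            rw [Finset.sum_add_distrib, Finset.sum_sub_distrib,
              Finset.sum_ite_eq' X i (fun _ => (1:ℤ)),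
              Finset.sum_ite_eq' X j (fun _ => (1:ℤ))]
          rw [hsum]
          by_cases hiX : i ∈ X
          · by_cases hjX : j ∈ X
            · simp only [hiX, hjX, if_true]; linarith
            · have hne : ∑ k ∈ X, x k ≠ f X := fun h => hjX (hX' X h hiX)
              simp only [hiX, hjX, if_true, if_false]; omega
          · simp only [hiX, if_false]
            by_cases hjX : j ∈ X <;> simp only [hjX, if_true, if_false] <;> linarith
      · exact ⟨∅, fun _ h => absurd h hj⟩
    · exact ⟨∅, fun h => absurd h hi⟩
  choose T hT using key
  -- unions over I
  set U : N → Finset N := fun j => I.sup (fun i => T i j) with hU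
  have hUtight : ∀ j ∈ J, ∑ k ∈ U j, x k = f (U j) := by
    intro j hj
    refine Finset.sup_induction (p := fun S : Finset N => ∑ k ∈ S, x k = f S) ?_ ?_ ?_
    · simpa using hf0.symm
    · intro a ha b hb; exact (tun a b ha hb).1
    · intro i hi; exact (hT i j hi hj).1
  have hIU : ∀ j ∈ J, I ⊆ U j := by
    intro j hj i hi
    exact Finset.mem_sup.mpr ⟨i, hi, (hT i j hi hj).2.1⟩
  have hjU : ∀ j ∈ J, j ∉ U j := by
    intro j hj hmem
    obtain ⟨i, hi, hmem⟩ := Finset.mem_sup.mp hmem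
    exact (hT i j hi hj).2.2 hmem
  -- intersection over J
  set W : Finset N := J.inf U with hW
  have hWtight : ∑ k ∈ W, x k = f W := by
    refine Finset.inf_induction (p := fun S : Finset N => ∑ k ∈ S, x k = f S) ?_ ?_ ?_
    · simpa using hxs
    · intro a ha b hb; exact (tun a b ha hb).2
    · intro j hj; exact hUtight j hj
  have hIW : I ⊆ W := Finset.le_inf (fun j hj => hIU j hj)
  have hdisj : Disjoint W J := by
    rw [Finset.disjoint_right]
    intro j hj hjW
    exact hjU j hj (Finset.mem_of_subset (Finset.inf_le hj) hjW)
  -- final contradiction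
  have h1 := hsuper W (I ∪ J)
  have e1 : W ∪ (I ∪ J) = W ∪ J := by
    rw [← Finset.union_assoc, Finset.union_eq_left.mpr hIW]
  have e2 : W ∩ (I ∪ J) = I := by
    rw [Finset.inter_union_distrib_left, Finset.inter_eq_right.mpr hIW,
      Finset.disjoint_iff_inter_eq_empty.mp hdisj, Finset.union_empty]
  rw [e1, e2] at h1
  have h2 := hxb (W ∪ J)
  have h3 : ∑ k ∈ W ∪ J, x k = ∑ k ∈ W, x k + ∑ k ∈ J, x k := Finset.sum_union hdisj
  linarith
end

section
/- Let f : 2^N → ℤ be a normalized supermodular function with base-polyhedron B̄ and M-convex set B̈ = B̄ ∩ ℤ^N. For any x ∈ B̈, y ∈ B̄, and i ∈ supp⁺(x−y) = {k : x_k > y_k}, there exists j ∈ supp⁻(x−y) = {k : x_k < y_k} such that x − χ_i + χ_j ∈ B̈. -/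
open Finset

/-- The base-polyhedron of an integer-valued supermodular function. -/
def basePoly {N : Type*} [Fintype N] (f : Finset N → ℤ) : Set (N → ℝ) :=
  {y | (∑ i, y i) = f Finset.univ ∧ ∀ X : Finset N, (f X : ℝ) ≤ ∑ i ∈ X, y i}

/-
Among the sets X ∋ i that are tight for x (f X = x(X)), supermodularity makes the family closed
under intersection, so there is a smallest one, A. Since y(A) ≥ f(A) = x(A) and y i < x i, some
j ∈ A \ {i} has x j < y j. Every tight set through i contains A, hence j, so moving a unit from i
to j never violates a tight constraint, and all other constraints have slack at least 1 because
x and f are integral.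
-/

theorem sum_sub_indicator_add_indicator {N : Type*} [DecidableEq N] (x : N → ℤ) (i j : N)
    (X : Finset N) :
    ∑ k ∈ X, (x k - (if k = i then 1 else 0) + (if k = j then 1 else 0)) =
      ∑ k ∈ X, x k - (if i ∈ X then 1 else 0) + (if j ∈ X then 1 else 0) := by
  simp only [sum_add_distrib, sum_sub_distrib, sum_ite_eq']

namespace MSet

variable {N : Type*} [Fintype N] [DecidableEq N] {f : Finset N → ℤ} {x : N → ℤ}

theorem exchange_mem (hx : x ∈ MSet f) {i j : N}
    (hij : ∀ X : Finset N, i ∈ X → f X = ∑ k ∈ X, x k → j ∈ X) :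
    (fun k => x k - (if k = i then 1 else 0) + (if k = j then 1 else 0)) ∈ MSet f := by
  refine ⟨?_, fun X => ?_⟩
  · simpa [sum_sub_indicator_add_indicator] using hx.1
  · have hfX := hx.2 X
    rw [sum_sub_indicator_add_indicator]
    by_cases hiX : i ∈ X
    · by_cases hjX : j ∈ X
      · simp [hiX, hjX, hfX]
      · have hslack : f X ≠ ∑ k ∈ X, x k := fun htight => hjX (hij X hiX htight)
        simp only [hiX, hjX, if_true, if_false]
        omega
    · by_cases hjX : j ∈ X <;> simp [hiX, hjX] <;> omega

theorem inter_tight (hsuper : ∀ X Y : Finset N, f X + f Y ≤ f (X ∪ Y) + f (X ∩ Y))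
    (hx : x ∈ MSet f) {X Y : Finset N} (hX : f X = ∑ k ∈ X, x k) (hY : f Y = ∑ k ∈ Y, x k) :
    f (X ∩ Y) = ∑ k ∈ X ∩ Y, x k := by
  have hunion := hx.2 (X ∪ Y)
  have hinter := hx.2 (X ∩ Y)
  have hmod : ∑ k ∈ X ∪ Y, x k + ∑ k ∈ X ∩ Y, x k = ∑ k ∈ X, x k + ∑ k ∈ Y, x k :=
    sum_union_inter
  linarith [hsuper X Y]

variable (f x) in
def tightHull (i : N) : Finset N :=
  ({X | i ∈ X ∧ f X = ∑ k ∈ X, x k} : Finset (Finset N)).inf id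

theorem tightHull_le {i : N} {X : Finset N} (hiX : i ∈ X) (hX : f X = ∑ k ∈ X, x k) :
    tightHull f x i ⊆ X :=
  inf_le (f := id) (mem_filter.2 ⟨mem_univ X, hiX, hX⟩)

theorem mem_tightHull_and_tight (hsuper : ∀ X Y : Finset N, f X + f Y ≤ f (X ∪ Y) + f (X ∩ Y))
    (hx : x ∈ MSet f) (i : N) :
    i ∈ tightHull f x i ∧ f (tightHull f x i) = ∑ k ∈ tightHull f x i, x k := by
  refine inf_induction (p := fun A => i ∈ A ∧ f A = ∑ k ∈ A, x k) ⟨mem_univ i, hx.1.symm⟩ ?_ ?_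
  · rintro X ⟨hiX, hX⟩ Y ⟨hiY, hY⟩
    exact ⟨mem_inter.2 ⟨hiX, hiY⟩, inter_tight hsuper hx hX hY⟩
  · intro X hX
    exact (mem_filter.1 hX).2

end MSet

open MSet in
theorem stmt_3_general {N : Type*} [Fintype N] [DecidableEq N]
    (f : Finset N → ℤ)
    (hsuper : ∀ X Y : Finset N, f X + f Y ≤ f (X ∪ Y) + f (X ∩ Y))
    (x : N → ℤ) (hx : x ∈ MSet f) (y : N → ℝ) (hy : y ∈ basePoly f)
    (i : N) (hi : y i < (x i : ℝ)) :
    ∃ j : N, (x j : ℝ) < y j ∧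
      (fun k => x k - (if k = i then 1 else 0) + (if k = j then 1 else 0)) ∈ MSet f := by
  set A := tightHull f x i
  obtain ⟨hiA, hA⟩ := mem_tightHull_and_tight hsuper hx i
  have hlt : ∑ k ∈ A.erase i, (x k : ℝ) < ∑ k ∈ A.erase i, y k := by
    have hyA : (f A : ℝ) ≤ ∑ k ∈ A, y k := hy.2 A
    have hxA : (f A : ℝ) = ∑ k ∈ A, (x k : ℝ) := by exact_mod_cast hA
    rw [← sum_erase_add A _ hiA] at hyA hxA
    linarith
  obtain ⟨j, hjA, hj⟩ := exists_lt_of_sum_lt hlt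
  exact ⟨j, hj, exchange_mem hx fun X hiX hX => tightHull_le hiX hX (mem_of_mem_erase hjA)⟩

/-- exchange from an integral point towards a real point of the
base-polyhedron. -/
theorem stmt_3 {N : Type*} [Fintype N] [DecidableEq N]
    (f : Finset N → ℤ)
    (hsuper : ∀ X Y : Finset N, f X + f Y ≤ f (X ∪ Y) + f (X ∩ Y))
    (hf0 : f ∅ = 0)
    (x : N → ℤ) (hx : x ∈ MSet f) (y : N → ℝ) (hy : y ∈ basePoly f)
    (i : N) (hi : y i < (x i : ℝ)) :
    ∃ j : N, (x j : ℝ) < y j ∧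
      (fun k => x k - (if k = i then 1 else 0) + (if k = j then 1 else 0)) ∈ MSet f :=
  stmt_3_general f hsuper x hx y hy i hi
end

section
/- Let B̈ be the M-convex set of a normalized integer-valued supermodular function on a finite set N. For any x ∈ B̈ and distinct i, j, k ∈ N, if x − χ_i + χ_j ∈ B̈ and x − χ_j + χ_k ∈ B̈, then x − χ_i + χ_k ∈ B̈. -/
open Finset

lemma sum_shift {N : Type*} [Fintype N] [DecidableEq N] (x : N → ℤ) (i k : N)
    (X : Finset N) :
    ∑ l ∈ X, (x l - (if l = i then 1 else 0) + (if l = k then 1 else 0)) =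
      (∑ l ∈ X, x l) - (if i ∈ X then 1 else 0) + (if k ∈ X then 1 else 0) := by
  rw [Finset.sum_add_distrib, Finset.sum_sub_distrib,
    Finset.sum_ite_eq' X i (fun _ => (1 : ℤ)), Finset.sum_ite_eq' X k (fun _ => (1 : ℤ))]

/-- transitivity of elementary exchanges in an M-convex set. -/
theorem stmt_4 {N : Type*} [Fintype N] [DecidableEq N]
    (f : Finset N → ℤ)
    (hsuper : ∀ X Y : Finset N, f X + f Y ≤ f (X ∪ Y) + f (X ∩ Y))
    (hf0 : f ∅ = 0)
    (x : N → ℤ) (hx : x ∈ MSet f)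
    (i j k : N) (hij : i ≠ j) (hjk : j ≠ k) (hik : i ≠ k)
    (h1 : (fun l => x l - (if l = i then 1 else 0) + (if l = j then 1 else 0)) ∈ MSet f)
    (h2 : (fun l => x l - (if l = j then 1 else 0) + (if l = k then 1 else 0)) ∈ MSet f) :
    (fun l => x l - (if l = i then 1 else 0) + (if l = k then 1 else 0)) ∈ MSet f := by
  obtain ⟨hx1, hx2⟩ := hx
  obtain ⟨h11, h12⟩ := h1
  obtain ⟨h21, h22⟩ := h2
  constructor
  · rw [sum_shift]
    simp [hx1]
  · intro X
    have e1 := h12 X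
    have e2 := h22 X
    rw [sum_shift] at e1 e2 ⊢
    by_cases hiX : i ∈ X <;> by_cases hjX : j ∈ X <;> by_cases hkX : k ∈ X <;>
      simp_all <;> linarith
end

section
/- Let U be a finite set of vectors in ℝ^n and let x ∈ U be decreasingly minimal in U (for every y ∈ U, the decreasing rearrangement x↓ is lexicographically less than or equal to y↓). Assume there is some y ∈ U with y↓ ≠ x↓, and let ε = min{y↓_i − x↓_i : y ∈ U, i ∈ [n], y↓_i > x↓_i}. Then x is a minimizer over U of the symmetric strictly convex function Φ(z) = ∑_{i=1}^n (2n)^{z_i/ε}; moreover, Φ(y) > Φ(x) for every y ∈ U with y↓ ≠ x↓. -/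
open Finset

/-- The decreasing rearrangement of a vector in `ℝ^n`. -/
noncomputable def dRe {n : ℕ} (x : Fin n → ℝ) : Fin n → ℝ :=
  fun i => (x ∘ Tuple.sort x) i.rev

/-- Lexicographic order on vectors in `ℝ^n`. -/
def lexLE {n : ℕ} (a b : Fin n → ℝ) : Prop :=
  a = b ∨ ∃ k : Fin n, (∀ i, i < k → a i = b i) ∧ a k < b k

/-
If `x↓` and `y↓` first differ at position `k`, then `y↓ k ≥ x↓ k + ε`, so with `f t = (2n)^(t/ε)`
the single term `f (y↓ k)` exceeds `2n · f (x↓ k)`, while the at most `n` remaining terms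
`f (x↓ i)`, `i ≥ k`, are each at most `f (x↓ k)` because `x↓` is decreasing. Since `Φ` is
symmetric, it can be evaluated on the rearrangements.
-/

lemma dRe_antitone {n : ℕ} (z : Fin n → ℝ) : Antitone (dRe z) :=
  fun _ _ hij => Tuple.monotone_sort z (Fin.rev_le_rev.mpr hij)

lemma sum_comp_dRe {n : ℕ} (z : Fin n → ℝ) (f : ℝ → ℝ) :
    ∑ i, f (dRe z i) = ∑ i, f (z i) :=
  Equiv.sum_comp (Fin.revPerm.trans (Tuple.sort z)) (fun i => f (z i))

lemma sum_lt_sum_of_lex_of_antitone {n : ℕ} {f : ℝ → ℝ} (hf : Monotone f)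
    (hf₀ : ∀ t, 0 ≤ f t) {a b : Fin n → ℝ} (ha : Antitone a) (k : Fin n)
    (hpre : ∀ i < k, a i = b i) (hk : n * f (a k) < f (b k)) :
    ∑ i, f (a i) < ∑ i, f (b i) := by
  classical
  rw [← sum_filter_add_sum_filter_not univ (· < k) (fun i => f (a i)),
    ← sum_filter_add_sum_filter_not univ (· < k) (fun i => f (b i)),
    sum_congr rfl fun i hi => congrArg f (hpre i (mem_filter.mp hi).2)]
  apply add_lt_add_right
  have hcard : (#(univ.filter fun i : Fin n => ¬ i < k) : ℝ) ≤ n := by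
    exact_mod_cast (card_filter_le _ _).trans_eq (card_fin n)
  calc ∑ i ∈ univ.filter (¬ · < k), f (a i)
      ≤ #(univ.filter fun i : Fin n => ¬ i < k) • f (a k) :=
        sum_le_card_nsmul _ _ _ fun i hi => hf (ha (not_lt.mp (mem_filter.mp hi).2))
    _ ≤ n * f (a k) := by rw [nsmul_eq_mul]; gcongr; exact hf₀ _
    _ < f (b k) := hk
    _ ≤ ∑ i ∈ univ.filter (¬ · < k), f (b i) :=
        single_le_sum (f := fun i => f (b i)) (fun i _ => hf₀ _) (by simp)

lemma mul_rpow_div_lt_rpow_div {B c s t ε : ℝ} (hB : 1 ≤ B) (hcB : c < B) (hε : 0 < ε)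
    (hst : s + ε ≤ t) : c * B ^ (s / ε) < B ^ (t / ε) :=
  calc c * B ^ (s / ε) < B * B ^ (s / ε) := by gcongr
    _ = B ^ (1 + s / ε) := by rw [Real.rpow_add (by linarith), Real.rpow_one]
    _ ≤ B ^ (t / ε) := by
        gcongr
        rw [← div_self hε.ne', ← add_div]
        gcongr
        linarith

theorem stmt_6_general {n : ℕ} (hn : 0 < n)
    (U : Finset (Fin n → ℝ)) (x : Fin n → ℝ)
    (hdm : ∀ y ∈ U, lexLE (dRe x) (dRe y))
    (ε : ℝ)
    (hub : ∀ y ∈ U, ∀ i : Fin n, dRe x i < dRe y i → ε ≤ dRe y i - dRe x i)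
    (hmem : ∃ y ∈ U, ∃ i : Fin n, dRe x i < dRe y i ∧ ε = dRe y i - dRe x i) :
    (∀ y ∈ U, (∑ i, (2 * n : ℝ) ^ (x i / ε)) ≤ ∑ i, (2 * n : ℝ) ^ (y i / ε)) ∧
    (∀ y ∈ U, dRe y ≠ dRe x →
      (∑ i, (2 * n : ℝ) ^ (x i / ε)) < ∑ i, (2 * n : ℝ) ^ (y i / ε)) := by
  have hε : 0 < ε := by
    obtain ⟨y, -, i, hlt, rfl⟩ := hmem
    exact sub_pos.mpr hlt
  have hn' : (1 : ℝ) ≤ n := by exact_mod_cast hn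
  set f : ℝ → ℝ := fun t => (2 * n : ℝ) ^ (t / ε)
  have hf : Monotone f := fun s t hst => by
    dsimp only [f]; gcongr; linarith
  have hstrict : ∀ y ∈ U, dRe y ≠ dRe x → ∑ i, f (x i) < ∑ i, f (y i) := by
    intro y hy hyx
    rw [← sum_comp_dRe x, ← sum_comp_dRe y]
    obtain heq | ⟨k, hpre, hk⟩ := hdm y hy
    · exact absurd heq.symm hyx
    refine sum_lt_sum_of_lex_of_antitone hf (fun t => by positivity) (dRe_antitone x) k hpre ?_
    exact mul_rpow_div_lt_rpow_div (by linarith) (by linarith) hε (by linarith [hub y hy k hk])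
  refine ⟨fun y hy => ?_, hstrict⟩
  by_cases h : dRe y = dRe x
  · show ∑ i, f (x i) ≤ ∑ i, f (y i)
    rw [← sum_comp_dRe x, ← sum_comp_dRe y, h]
  · exact (hstrict y hy h).le

/-- a decreasingly minimal element of a finite set `U` minimizes the
symmetric strictly convex function `Φ(z) = ∑ i, (2n)^(z_i/ε)` over `U`, strictly so
against vectors not value-equivalent to it. -/
theorem stmt_6 {n : ℕ} (hn : 0 < n)
    (U : Finset (Fin n → ℝ)) (x : Fin n → ℝ) (hxU : x ∈ U)
    (hdm : ∀ y ∈ U, lexLE (dRe x) (dRe y))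
    (hne : ∃ y ∈ U, dRe y ≠ dRe x)
    (ε : ℝ)
    (hub : ∀ y ∈ U, ∀ i : Fin n, dRe x i < dRe y i → ε ≤ dRe y i - dRe x i)
    (hmem : ∃ y ∈ U, ∃ i : Fin n, dRe x i < dRe y i ∧ ε = dRe y i - dRe x i) :
    (∀ y ∈ U, (∑ i, (2 * n : ℝ) ^ (x i / ε)) ≤ ∑ i, (2 * n : ℝ) ^ (y i / ε)) ∧
    (∀ y ∈ U, dRe y ≠ dRe x →
      (∑ i, (2 * n : ℝ) ^ (x i / ε)) < ∑ i, (2 * n : ℝ) ^ (y i / ε)) :=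
  stmt_6_general hn U x hdm ε hub hmem
end

section
/- Let f_M, f_C : 2^N → ℤ be normalized supermodular functions, with M-convex set B̈_M of f_M and base-polyhedron B̄_C of f_C. Let Φ : ℝ^N → ℝ be symmetric and strictly convex, and suppose z* = x* + y* minimizes Φ over the Minkowski sum B_E = B̈_M + B̄_C, where x* ∈ B̈_M and y* ∈ B̄_C. If y* + ε(χ_i − χ_j) ∈ B̄_C for some i, j ∈ N and ε > 0, then z*_i ≥ z*_j. -/
open Finset

/-- The Minkowski sum `B_E = B̈_M + B̄_C` of possible utility vectors for mixed goods. -/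
def BE {N : Type*} [Fintype N] (fM fC : Finset N → ℤ) : Set (N → ℝ) :=
  {z | ∃ x ∈ MSet fM, ∃ y ∈ basePoly fC, z = fun i => (x i : ℝ) + y i}

/-!
If `z*_i < z*_j`, a small transfer `δ (χ_i - χ_j)` from `j` to `i` is still available in the
convex set `B̄_C`, so `z* + δ (χ_i - χ_j)` lies in `B_E`. That point is a proper convex
combination of `z*` and of `z*` with coordinates `i, j` swapped; both have the same `Φ`-value by
symmetry, so strict convexity makes it strictly better than `z*`, contradicting minimality.
-/

theorem convex_basePoly {N : Type*} [Fintype N] (f : Finset N → ℤ) :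
    Convex ℝ (basePoly f) := by
  rintro y ⟨hy_univ, hy⟩ y' ⟨hy'_univ, hy'⟩ a b ha hb hab
  have hsum : ∀ X : Finset N, ∑ k ∈ X, (a • y + b • y') k
      = a * ∑ k ∈ X, y k + b * ∑ k ∈ X, y' k := by
    intro X
    simp only [Pi.add_apply, Pi.smul_apply, smul_eq_mul, sum_add_distrib, mul_sum]
  refine ⟨?_, fun X => ?_⟩
  · rw [hsum, hy_univ, hy'_univ, ← add_mul, hab, one_mul]
  · calc (f X : ℝ) = a * f X + b * f X := by rw [← add_mul, hab, one_mul]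
      _ ≤ _ := by rw [hsum]; gcongr <;> [exact hy X; exact hy' X]

section Transfer

variable {N : Type*} [DecidableEq N]

def transfer (i j : N) : N → ℝ := Pi.single i 1 - Pi.single j 1

theorem transfer_apply (i j k : N) :
    transfer i j k = (if k = i then 1 else 0) - (if k = j then 1 else 0) := by
  simp only [transfer, Pi.sub_apply, Pi.single_apply]

theorem comp_swap_sub (a : N → ℝ) {i j : N} (hij : i ≠ j) :
    a ∘ Equiv.swap i j - a = (a j - a i) • transfer i j := by
  funext k
  simp only [Pi.sub_apply, Function.comp_apply, Pi.smul_apply, smul_eq_mul, transfer_apply]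
  rcases eq_or_ne k i with rfl | hki
  · simp [hij]
  rcases eq_or_ne k j with rfl | hkj
  · simp [hki]
  simp [Equiv.swap_apply_of_ne_of_ne hki hkj, hki, hkj]

theorem StrictConvexOn.apply_add_smul_transfer_lt {Φ : (N → ℝ) → ℝ}
    (hconv : StrictConvexOn ℝ Set.univ Φ) (hsym : ∀ (σ : Equiv.Perm N) (z : N → ℝ), Φ (z ∘ σ) = Φ z)
    {a : N → ℝ} {i j : N} {δ : ℝ} (hδ : 0 < δ) (hδa : δ < a j - a i) :
    Φ (a + δ • transfer i j) < Φ a := by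
  have hd : 0 < a j - a i := hδ.trans hδa
  have hij : i ≠ j := by rintro rfl; simp at hd
  set t := δ / (a j - a i)
  have ht0 : 0 < t := div_pos hδ hd
  have ht1 : t < 1 := (div_lt_one hd).2 hδa
  have hne : a ≠ a ∘ Equiv.swap i j := fun h => by
    have := congrFun h i
    simp only [Function.comp_apply, Equiv.swap_apply_left] at this
    linarith
  have hcomb : a + δ • transfer i j = (1 - t) • a + t • (a ∘ Equiv.swap i j) := by
    rw [show (1 - t) • a + t • (a ∘ Equiv.swap i j) = a + t • (a ∘ Equiv.swap i j - a) by
      module, comp_swap_sub a hij, smul_smul, div_mul_cancel₀ δ hd.ne']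
  calc Φ (a + δ • transfer i j)
      < (1 - t) • Φ a + t • Φ (a ∘ Equiv.swap i j) := by
        rw [hcomb]
        exact hconv.2 (Set.mem_univ _) (Set.mem_univ _) hne (by linarith) ht0 (by ring)
    _ = Φ a := by rw [hsym]; module

end Transfer

theorem stmt_8_general {N : Type*} [Fintype N] [DecidableEq N]
    (fM fC : Finset N → ℤ)
    (Φ : (N → ℝ) → ℝ)
    (hsym : ∀ (σ : Equiv.Perm N) (z : N → ℝ), Φ (z ∘ σ) = Φ z)
    (hconv : StrictConvexOn ℝ Set.univ Φ)
    (xs : N → ℤ) (ys : N → ℝ) (hxs : xs ∈ MSet fM) (hys : ys ∈ basePoly fC)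
    (hmin : ∀ z ∈ BE fM fC, Φ (fun i => (xs i : ℝ) + ys i) ≤ Φ z)
    (i j : N) (ε : ℝ) (hε : 0 < ε)
    (hmem : (fun k => ys k + ε * ((if k = i then (1 : ℝ) else 0) - (if k = j then 1 else 0)))
              ∈ basePoly fC) :
    (xs j : ℝ) + ys j ≤ (xs i : ℝ) + ys i := by
  set z : N → ℝ := fun k => (xs k : ℝ) + ys k
  by_contra! hlt
  set δ := min ε ((z j - z i) / 2)
  have hδ : 0 < δ := lt_min hε (by linarith)
  have hδε : δ / ε ∈ Set.Icc (0 : ℝ) 1 :=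
    ⟨by positivity, (div_le_one hε).2 (min_le_left _ _)⟩
  have hmem' : ys + ε • transfer i j ∈ basePoly fC := by
    convert hmem using 1
    funext k
    simp [transfer_apply]
  have hys' : ys + δ • transfer i j ∈ basePoly fC := by
    simpa [smul_smul, div_mul_cancel₀ δ hε.ne'] using
      (convex_basePoly fC).add_smul_mem hys hmem' hδε
  have hz' : z + δ • transfer i j ∈ BE fM fC := ⟨xs, hxs, _, hys', by funext k; simp [z, add_assoc]⟩
  have hlt' : Φ (z + δ • transfer i j) < Φ z :=
    hconv.apply_add_smul_transfer_lt hsym hδ ((min_le_right _ _).trans_lt (by linarith))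
  exact (hmin _ hz').not_gt hlt'

/-- at a Φ-minimizer `z* = x* + y*` over `B_E`, if some amount of a
divisible good can be transferred from `j` to `i` within `B̄_C`, then `z*_i ≥ z*_j`. -/
theorem stmt_8 {N : Type*} [Fintype N] [DecidableEq N]
    (fM fC : Finset N → ℤ)
    (hM : ∀ X Y : Finset N, fM X + fM Y ≤ fM (X ∪ Y) + fM (X ∩ Y)) (hM0 : fM ∅ = 0)
    (hC : ∀ X Y : Finset N, fC X + fC Y ≤ fC (X ∪ Y) + fC (X ∩ Y)) (hC0 : fC ∅ = 0)
    (Φ : (N → ℝ) → ℝ)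
    (hsym : ∀ (σ : Equiv.Perm N) (z : N → ℝ), Φ (z ∘ σ) = Φ z)
    (hconv : StrictConvexOn ℝ Set.univ Φ)
    (xs : N → ℤ) (ys : N → ℝ) (hxs : xs ∈ MSet fM) (hys : ys ∈ basePoly fC)
    (hmin : ∀ z ∈ BE fM fC, Φ (fun i => (xs i : ℝ) + ys i) ≤ Φ z)
    (i j : N) (ε : ℝ) (hε : 0 < ε)
    (hmem : (fun k => ys k + ε * ((if k = i then (1 : ℝ) else 0) - (if k = j then 1 else 0)))
              ∈ basePoly fC) :
    (xs j : ℝ) + ys j ≤ (xs i : ℝ) + ys i :=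
  stmt_8_general fM fC Φ hsym hconv xs ys hxs hys hmin i j ε hε hmem
end

section
/- In the setting of a Φ-minimizer z* = x* + y* over B_E = B̈_M + B̄_C (Φ symmetric strictly convex, x* ∈ B̈_M, y* ∈ B̄_C), for any real β the set N' = {i ∈ N : z*_i ≥ β} is tight for f_C at y*, i.e., y*(N') = f_C(N'). -/
open Finset

/-- Convexity-type lemma: points between `y` and `y + ε • d` are in the base polyhedron. -/
lemma seg_mem {N : Type*} [Fintype N] (fC : Finset N → ℤ) (y d : N → ℝ) (ε δ : ℝ)
    (hy : y ∈ basePoly fC) (hw : (fun k => y k + ε * d k) ∈ basePoly fC)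
    (h0 : 0 ≤ δ) (hδε : δ ≤ ε) (hε : 0 < ε) :
    (fun k => y k + δ * d k) ∈ basePoly fC := by
  obtain ⟨hy1, hy2⟩ := hy
  obtain ⟨hw1, hw2⟩ := hw
  have hσ : ∀ A : Finset N, ∀ c : ℝ, ∑ k ∈ A, (y k + c * d k) = ∑ k ∈ A, y k + c * ∑ k ∈ A, d k := by
    intro A c
    rw [Finset.sum_add_distrib, Finset.mul_sum]
  have hd0 : ∑ k, d k = 0 := by
    rw [hσ Finset.univ ε, hy1] at hw1
    have : ε * ∑ k, d k = 0 := by linarith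
    exact (mul_eq_zero.mp this).resolve_left (ne_of_gt hε)
  constructor
  · rw [hσ Finset.univ δ, hd0, hy1]; ring
  · intro A
    rw [hσ A δ]
    have h1 := hy2 A
    have h2 := hw2 A
    rw [hσ A ε] at h2
    rcases le_or_gt 0 (∑ k ∈ A, d k) with h | h
    · nlinarith
    · nlinarith

/-- Exchange property of base polyhedra. -/
lemma exchange {N : Type*} [Fintype N] [DecidableEq N] (fC : Finset N → ℤ)
    (hC : ∀ X Y : Finset N, fC X + fC Y ≤ fC (X ∪ Y) + fC (X ∩ Y))
    (y : N → ℝ) (hy : y ∈ basePoly fC) (X : Finset N)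
    (hlt : (fC X : ℝ) < ∑ k ∈ X, y k) (hne : X.Nonempty) (hnu : X ≠ Finset.univ) :
    ∃ i ∈ X, ∃ j ∉ X, ∃ ε : ℝ, 0 < ε ∧
      (fun k => y k + ε * ((if k = j then (1:ℝ) else 0) - (if k = i then 1 else 0))) ∈ basePoly fC := by
  classical
  obtain ⟨hy1, hy2⟩ := hy
  set Tight : Finset N → Prop := fun A => (fC A : ℝ) = ∑ k ∈ A, y k with hT
  have key : ∀ A B, Tight A → Tight B → Tight (A ∪ B) ∧ Tight (A ∩ B) := by
    intro A B hA hB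
    have h1 := hy2 (A ∪ B)
    have h2 := hy2 (A ∩ B)
    have h3 : ((fC A : ℝ) + fC B) ≤ (fC (A ∪ B) : ℝ) + fC (A ∩ B) := by
      exact_mod_cast hC A B
    have h4 : ∑ k ∈ A ∪ B, y k + ∑ k ∈ A ∩ B, y k = ∑ k ∈ A, y k + ∑ k ∈ B, y k :=
      Finset.sum_union_inter
    simp only [hT] at hA hB ⊢
    constructor <;> linarith
  -- find a separating pair
  have hsepex : ∃ i ∈ X, ∃ j ∉ X, ∀ A : Finset N, i ∈ A → j ∉ A → ¬ Tight A := by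
    by_contra hcon
    push_neg at hcon
    have hcon' : ∀ i j : N, ∃ A : Finset N, i ∈ X → j ∉ X → i ∈ A ∧ j ∉ A ∧ Tight A := by
      intro i j
      by_cases hij : i ∈ X ∧ j ∉ X
      · obtain ⟨A, h1, h2, h3⟩ := hcon i hij.1 j hij.2
        exact ⟨A, fun _ _ => ⟨h1, h2, h3⟩⟩
      · exact ⟨∅, fun hi hj => absurd ⟨hi, hj⟩ hij⟩
    choose A hA using hcon'
    have hXc : (Finset.univ \ X).Nonempty := by
      rw [Finset.sdiff_nonempty]
      intro h
      exact hnu (le_antisymm (Finset.subset_univ X) h)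
    set Ti : N → Finset N := fun i => (Finset.univ \ X).inf' hXc (A i) with hTidef
    have hTi : ∀ i ∈ X, Tight (Ti i) ∧ i ∈ Ti i := by
      intro i hi
      apply Finset.inf'_induction hXc (A i) (p := fun B => Tight B ∧ i ∈ B)
      · rintro B ⟨hB1, hB2⟩ C ⟨hC1, hC2⟩
        exact ⟨(key B C hB1 hC1).2, Finset.mem_inter.mpr ⟨hB2, hC2⟩⟩
      · intro j hj
        have hjX : j ∉ X := by
          simp only [Finset.mem_sdiff] at hj; exact hj.2
        obtain ⟨h1, _, h3⟩ := hA i j hi hjX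
        exact ⟨h3, h1⟩
    have hTiX : ∀ i ∈ X, Ti i ⊆ X := by
      intro i hi k hk
      by_contra hkX
      have hkc : k ∈ Finset.univ \ X := Finset.mem_sdiff.mpr ⟨Finset.mem_univ k, hkX⟩
      have hle : Ti i ⊆ A i k := Finset.inf'_le (A i) hkc
      exact (hA i k hi hkX).2.1 (hle hk)
    set T : Finset N := X.sup' hne Ti with hTdef
    have hTt : Tight T := by
      apply Finset.sup'_induction hne Ti (p := Tight)
      · intro B hB C hCt
        exact (key B C hB hCt).1
      · intro i hi
        exact (hTi i hi).1
    have hTX : T = X := by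
      apply le_antisymm
      · exact Finset.sup'_le hne Ti hTiX
      · intro i hi
        exact Finset.le_sup' Ti hi ((hTi i hi).2)
    rw [hTX] at hTt
    exact absurd hTt (ne_of_lt hlt)
  obtain ⟨i, hiX, j, hjX, hsep⟩ := hsepex
  -- now construct ε
  refine ⟨i, hiX, j, hjX, ?_⟩
  have hij : j ≠ i := fun h => hjX (h ▸ hiX)
  set S : Finset (Finset N) := Finset.univ.filter (fun A => i ∈ A ∧ j ∉ A) with hSdef
  have hSne : S.Nonempty := ⟨{i}, by simp [hSdef, hij]⟩
  set ε : ℝ := S.inf' hSne (fun A => ∑ k ∈ A, y k - fC A) with hεdef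
  have hεpos : 0 < ε := by
    rw [hεdef, Finset.lt_inf'_iff]
    intro A hAS
    simp only [hSdef, Finset.mem_filter] at hAS
    have h1 := hy2 A
    have h2 : ¬ Tight A := hsep A hAS.2.1 hAS.2.2
    simp only [hT] at h2
    have : (fC A : ℝ) < ∑ k ∈ A, y k := lt_of_le_of_ne h1 h2
    linarith
  refine ⟨ε, hεpos, ?_, ?_⟩
  · -- sum over univ
    have : ∑ k, (y k + ε * ((if k = j then (1:ℝ) else 0) - (if k = i then 1 else 0)))
        = ∑ k, y k + ε * ((∑ k, if k = j then (1:ℝ) else 0) - ∑ k, if k = i then (1:ℝ) else 0) := by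
      rw [Finset.sum_add_distrib]
      congr 1
      rw [← Finset.mul_sum, Finset.sum_sub_distrib]
    rw [this]
    simp [hy1]
  · intro A
    have hsum : ∑ k ∈ A, (y k + ε * ((if k = j then (1:ℝ) else 0) - (if k = i then 1 else 0)))
        = ∑ k ∈ A, y k + ε * ((if j ∈ A then (1:ℝ) else 0) - (if i ∈ A then 1 else 0)) := by
      rw [Finset.sum_add_distrib]
      congr 1
      rw [← Finset.mul_sum, Finset.sum_sub_distrib]
      simp [Finset.sum_ite_eq']
    rw [hsum]
    have h1 := hy2 A
    by_cases hiA : i ∈ A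
    · by_cases hjA : j ∈ A
      · simp only [hiA, hjA, if_true]; linarith
      · have hAS : A ∈ S := by simp [hSdef, hiA, hjA]
        have hle : ε ≤ ∑ k ∈ A, y k - fC A := Finset.inf'_le _ hAS
        simp only [hiA, hjA, if_true, if_false]
        linarith
    · by_cases hjA : j ∈ A
      · simp only [hiA, hjA, if_true, if_false]; linarith
      · simp only [hiA, hjA, if_false]; linarith

/-- at a Φ-minimizer `z* = x* + y*` over `B_E`, every upper level set
`N' = {i : z*_i ≥ β}` is tight for `f_C` at `y*`. -/
theorem stmt_9 {N : Type*} [Fintype N] [DecidableEq N]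
    (fM fC : Finset N → ℤ)
    (hM : ∀ X Y : Finset N, fM X + fM Y ≤ fM (X ∪ Y) + fM (X ∩ Y)) (hM0 : fM ∅ = 0)
    (hC : ∀ X Y : Finset N, fC X + fC Y ≤ fC (X ∪ Y) + fC (X ∩ Y)) (hC0 : fC ∅ = 0)
    (Φ : (N → ℝ) → ℝ)
    (hsym : ∀ (σ : Equiv.Perm N) (z : N → ℝ), Φ (z ∘ σ) = Φ z)
    (hconv : StrictConvexOn ℝ Set.univ Φ)
    (xs : N → ℤ) (ys : N → ℝ) (hxs : xs ∈ MSet fM) (hys : ys ∈ basePoly fC)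
    (hmin : ∀ z ∈ BE fM fC, Φ (fun i => (xs i : ℝ) + ys i) ≤ Φ z)
    (β : ℝ) (N' : Finset N) (hN' : ∀ i : N, i ∈ N' ↔ β ≤ (xs i : ℝ) + ys i) :
    ∑ i ∈ N', ys i = fC N' := by
  classical
  by_contra hnot
  have hlt : (fC N' : ℝ) < ∑ k ∈ N', ys k :=
    lt_of_le_of_ne (hys.2 N') (fun h => hnot h.symm)
  have hNne : N'.Nonempty := by
    rcases Finset.eq_empty_or_nonempty N' with h | h
    · exfalso; rw [h] at hlt; simp [hC0] at hlt
    · exact h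
  have hNu : N' ≠ Finset.univ := by
    intro h
    rw [h, hys.1] at hlt
    exact lt_irrefl _ hlt
  obtain ⟨i, hiN, j, hjN, ε, hεpos, hw⟩ := exchange fC hC ys hys N' hlt hNne hNu
  obtain ⟨z, hzf⟩ : ∃ z : N → ℝ, z = fun k => (xs k : ℝ) + ys k := ⟨_, rfl⟩
  have hzm : ∀ m, z m = (xs m : ℝ) + ys m := fun m => by rw [hzf]
  have hminz : ∀ w ∈ BE fM fC, Φ z ≤ Φ w := by rw [hzf]; exact hmin
  have hzi : β ≤ z i := by rw [hzm i]; exact (hN' i).mp hiN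
  have hzj : z j < β := by
    rw [hzm j]
    by_contra h
    exact hjN ((hN' j).mpr (le_of_not_gt h))
  have hji : z j < z i := lt_of_lt_of_le hzj hzi
  have hij : i ≠ j := fun h => absurd (h ▸ hji) (lt_irrefl _)
  obtain ⟨δ, hδpos, hδε, hδhalf⟩ :
      ∃ δ : ℝ, 0 < δ ∧ δ ≤ ε ∧ δ ≤ (z i - z j) / 2 :=
    ⟨min ε ((z i - z j) / 2), lt_min hεpos (by linarith), min_le_left _ _, min_le_right _ _⟩
  have hy'' : (fun k => ys k + δ * ((if k = j then (1:ℝ) else 0) - (if k = i then 1 else 0)))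
      ∈ basePoly fC :=
    seg_mem fC ys _ ε δ hys hw hδpos.le hδε hεpos
  obtain ⟨z', hz'f⟩ : ∃ z' : N → ℝ, z' = fun k => (xs k : ℝ) +
      (ys k + δ * ((if k = j then (1:ℝ) else 0) - (if k = i then 1 else 0))) := ⟨_, rfl⟩
  have hz'BE : z' ∈ BE fM fC := by
    rw [hz'f]
    exact ⟨xs, hxs, _, hy'', rfl⟩
  have hle : Φ z ≤ Φ z' := hminz z' hz'BE
  obtain ⟨t, htf⟩ : ∃ t : ℝ, t = δ / (z i - z j) := ⟨_, rfl⟩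
  have hzd : (0:ℝ) < z i - z j := by linarith
  have htpos : 0 < t := htf ▸ div_pos hδpos hzd
  have ht1 : t < 1 := by rw [htf, div_lt_one hzd]; linarith
  have htδ : t * (z i - z j) = δ := by rw [htf]; field_simp
  have hzswap : z ∘ (Equiv.swap i j) ≠ z := by
    intro h
    have h2 := congrFun h i
    simp only [Function.comp_apply, Equiv.swap_apply_left] at h2
    exact absurd h2 (ne_of_lt hji)
  have hA : z i = (xs i : ℝ) + ys i := hzm i
  have hB : z j = (xs j : ℝ) + ys j := hzm j
  have hcomb : z' = t • (z ∘ (Equiv.swap i j)) + (1 - t) • z := by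
    funext m
    simp only [hz'f, Pi.add_apply, Pi.smul_apply, smul_eq_mul, Function.comp_apply]
    rcases eq_or_ne m i with rfl | hmi
    · rw [Equiv.swap_apply_left, if_neg hij, if_pos rfl, hA, hB]
      rw [hA, hB] at htδ
      linear_combination htδ
    · rcases eq_or_ne m j with rfl | hmj
      · rw [Equiv.swap_apply_right, if_pos rfl, if_neg hmi, hA, hB]
        rw [hA, hB] at htδ
        linear_combination -htδ
      · rw [Equiv.swap_apply_of_ne_of_ne hmi hmj, if_neg hmj, if_neg hmi, hzm m]
        ring
  have hstrict := hconv.2 (Set.mem_univ (z ∘ (Equiv.swap i j))) (Set.mem_univ z) hzswap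
      htpos (by linarith : (0:ℝ) < 1 - t) (by ring : t + (1 - t) = 1)
  rw [hsym (Equiv.swap i j) z] at hstrict
  simp only [smul_eq_mul] at hstrict
  rw [← hcomb] at hstrict
  have heq : t * Φ z + (1 - t) * Φ z = Φ z := by ring
  linarith
end

section
/- Suppose there are n agents with binary additive valuations over a set E of goods, and an allocation exists in which every agent's utility is at most 1. If only divisible goods are considered (relaxed allocations, where indivisible goods may be split), then in every allocation minimizing a symmetric strictly convex function Φ of the utility vector, every agent's utility is at most 1. -/
open Finset

/-- A relaxed allocation: every good is fully (fractionally) distributed among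
agents who desire it. -/
def IsRelaxed {N E : Type*} [Fintype N] [Fintype E]
    (v : N → E → ℝ) (π : N → E → ℝ) : Prop :=
  (∀ i e, 0 ≤ π i e) ∧ (∀ i e, π i e ≤ 1) ∧
  (∀ e, ∑ i, π i e = 1) ∧ (∀ i e, v i e = 0 → π i e = 0)

/-- Utility of agent `i` in allocation `π`. -/
def util {N E : Type*} [Fintype N] [Fintype E]
    (v : N → E → ℝ) (π : N → E → ℝ) (i : N) : ℝ :=
  ∑ e, v i e * π i e

/-- if some relaxed allocation gives every agent utility at most 1,
then every relaxed allocation minimizing a symmetric strictly convex function of the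
utility vector gives every agent utility at most 1. -/
theorem stmt_15 {N E : Type*} [Fintype N] [Fintype E] [DecidableEq N]
    (v : N → E → ℝ) (hbin : ∀ i e, v i e = 0 ∨ v i e = 1)
    (Φ : (N → ℝ) → ℝ)
    (hsym : ∀ (σ : Equiv.Perm N) (z : N → ℝ), Φ (z ∘ σ) = Φ z)
    (hconv : StrictConvexOn ℝ Set.univ Φ)
    (hexists : ∃ π : N → E → ℝ, IsRelaxed v π ∧ ∀ i, util v π i ≤ 1)
    (πs : N → E → ℝ) (hπs : IsRelaxed v πs)
    (hmin : ∀ π : N → E → ℝ, IsRelaxed v π → Φ (util v πs) ≤ Φ (util v π)) :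
    ∀ i, util v πs i ≤ 1 := by
  classical
  by_contra hcon
  push_neg at hcon
  obtain ⟨i0, hi0⟩ := hcon
  set u := util v πs with hu
  obtain ⟨π₀, hπ₀, hw⟩ := hexists
  -- Local optimality: utility can only increase along an "exchange edge".
  have key : ∀ j k : N, (∃ e, 0 < πs j e ∧ v k e = 1) → u j ≤ u k := by
    rintro j k ⟨e, hpe, hve⟩
    by_contra hlt
    push_neg at hlt
    have hjk : j ≠ k := by rintro rfl; exact lt_irrefl _ hlt
    have hvj : v j e = 1 := by
      rcases hbin j e with h | h
      · exfalso; have := hπs.2.2.2 j e h; linarith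
      · exact h
    have hkle : πs j e + πs k e ≤ 1 := by
      have h1 : πs j e + πs k e = ∑ i ∈ ({j, k} : Finset N), πs i e := by
        rw [Finset.sum_pair hjk]
      rw [h1, ← hπs.2.2.1 e]
      exact Finset.sum_le_sum_of_subset_of_nonneg (Finset.subset_univ _)
        (fun i _ _ => hπs.1 i e)
    set ε := min (πs j e) (min (1 - πs k e) ((u j - u k) / 2)) with hεdef
    have hε0 : 0 < ε := by
      apply lt_min hpe
      apply lt_min <;> linarith
    have hε1 : ε ≤ πs j e := min_le_left _ _
    have hε2 : ε ≤ 1 - πs k e := le_trans (min_le_right _ _) (min_le_left _ _)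
    have hε3 : ε ≤ (u j - u k) / 2 := le_trans (min_le_right _ _) (min_le_right _ _)
    set π' : N → E → ℝ := fun i e' =>
      πs i e' + (if i = j ∧ e' = e then -ε else 0) + (if i = k ∧ e' = e then ε else 0)
      with hπ'def
    have hrel : IsRelaxed v π' := by
      refine ⟨?_, ?_, ?_, ?_⟩
      · intro i e'
        have h0 := hπs.1 i e'
        simp only [hπ'def]
        split_ifs with h1 h2 h2
        · exact absurd (h1.1.symm.trans h2.1) hjk
        · obtain ⟨rfl, rfl⟩ := h1; linarith
        · linarith
        · linarith
      · intro i e'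
        have h0 := hπs.2.1 i e'
        simp only [hπ'def]
        split_ifs with h1 h2 h2
        · exact absurd (h1.1.symm.trans h2.1) hjk
        · linarith
        · obtain ⟨rfl, rfl⟩ := h2; linarith
        · linarith
      · intro e'
        simp only [hπ'def]
        rw [Finset.sum_add_distrib, Finset.sum_add_distrib, hπs.2.2.1 e']
        by_cases he : e' = e
        · subst he
          simp [Finset.sum_ite_eq', hjk]
        · simp [he]
      · intro i e' hv0
        simp only [hπ'def]
        split_ifs with h1 h2 h2
        · exact absurd (h1.1.symm.trans h2.1) hjk
        · obtain ⟨rfl, rfl⟩ := h1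
          exact absurd hv0 (by rw [hvj]; norm_num)
        · obtain ⟨rfl, rfl⟩ := h2
          exact absurd hv0 (by rw [hve]; norm_num)
        · simp [hπs.2.2.2 i e' hv0]
    have hsumif : ∀ (i : N) (c : ℝ) (m : N), v m e = 1 →
        (∑ e', v i e' * if i = m ∧ e' = e then c else 0) = if i = m then c else 0 := by
      intro i c m hvm
      by_cases him : i = m
      · subst him
        simp [mul_ite, mul_zero, Finset.sum_ite_eq', hvm]
      · simp [him]
    have huu : util v π' = fun i => u i + (if i = j then -ε else 0) + (if i = k then ε else 0) := by
      funext i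
      simp only [util, hπ'def, mul_add, Finset.sum_add_distrib]
      rw [hsumif i (-ε) j hvj, hsumif i ε k hve]
      rfl
    set t := ε / (u j - u k) with htdef
    have hd : 0 < u j - u k := by linarith
    have ht0 : 0 < t := div_pos hε0 hd
    have ht1 : t < 1 := by
      rw [htdef, div_lt_one hd]; linarith
    have htε : t * (u j - u k) = ε := div_mul_cancel₀ ε (ne_of_gt hd)
    set σ := Equiv.swap j k with hσ
    have hne : u ≠ u ∘ ⇑σ := by
      intro h
      have := congrFun h j
      simp only [Function.comp_apply, hσ, Equiv.swap_apply_left] at this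
      linarith
    have hcomb : util v π' = (1 - t) • u + t • (u ∘ ⇑σ) := by
      rw [huu]; funext i
      simp only [Pi.add_apply, Pi.smul_apply, smul_eq_mul, Function.comp_apply]
      by_cases hij : i = j
      · subst hij
        rw [if_pos rfl, if_neg hjk]
        simp only [hσ, Equiv.swap_apply_left]
        nlinarith [htε]
      · by_cases hik : i = k
        · subst hik
          rw [if_neg hij, if_pos rfl]
          simp only [hσ, Equiv.swap_apply_right]
          nlinarith [htε]
        · rw [if_neg hij, if_neg hik]
          simp only [hσ, Function.comp_apply, Equiv.swap_apply_of_ne_of_ne hij hik]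
          ring
    have hconvlt := hconv.2 (Set.mem_univ u) (Set.mem_univ (u ∘ ⇑σ)) hne
      (by linarith : (0:ℝ) < 1 - t) ht0 (by ring)
    have hsymeq : Φ (u ∘ ⇑σ) = Φ u := hsym σ u
    have hminle := hmin π' hrel
    rw [hcomb] at hminle
    rw [hsymeq] at hconvlt
    simp only [smul_eq_mul] at hconvlt
    have heq : (1 - t) * Φ u + t * Φ u = Φ u := by ring
    linarith
  -- Reachability
  set step : N → N → Prop := fun a b => ∃ e, 0 < πs a e ∧ v b e = 1 with hstep
  have mono : ∀ k, Relation.ReflTransGen step i0 k → u i0 ≤ u k := by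
    intro k hk
    induction hk with
    | refl => exact le_refl _
    | tail _ h ih => exact le_trans ih (key _ _ h)
  set R : Finset N := Finset.univ.filter (fun k => Relation.ReflTransGen step i0 k) with hR
  have hi0R : i0 ∈ R := by
    simp only [hR, Finset.mem_filter, Finset.mem_univ, true_and]
    exact Relation.ReflTransGen.refl
  have hclosed : ∀ j ∈ R, ∀ e, 0 < πs j e → ∀ k, v k e ≠ 0 → k ∈ R := by
    intro j hj e hpe k hvk
    have hvk1 : v k e = 1 := (hbin k e).resolve_left hvk
    simp only [hR, Finset.mem_filter, Finset.mem_univ, true_and] at hj ⊢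
    exact hj.tail ⟨e, hpe, hvk1⟩
  set ER : Finset E := Finset.univ.filter (fun e => ∃ j ∈ R, 0 < πs j e) with hER
  have hfull : ∀ (π'' : N → E → ℝ), IsRelaxed v π'' → ∀ e ∈ ER, ∑ j ∈ R, π'' j e = 1 := by
    intro π'' hrel e he
    simp only [hER, Finset.mem_filter, Finset.mem_univ, true_and] at he
    obtain ⟨j, hjR, hj⟩ := he
    have hout : ∀ k ∈ Finset.univ, k ∉ R → π'' k e = 0 := by
      intro k _ hkR
      by_contra hne
      have hpos : 0 < π'' k e := lt_of_le_of_ne (hrel.1 k e) (Ne.symm hne)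
      have hv : v k e ≠ 0 := fun h => by
        rw [hrel.2.2.2 k e h] at hpos; exact lt_irrefl _ hpos
      exact hkR (hclosed j hjR e hj k hv)
    rw [Finset.sum_subset (Finset.subset_univ R) hout]
    exact hrel.2.2.1 e
  have hvmul : ∀ (π'' : N → E → ℝ), IsRelaxed v π'' → ∀ i e, v i e * π'' i e = π'' i e := by
    intro π'' hrel i e
    rcases hbin i e with h | h
    · rw [h, hrel.2.2.2 i e h]; ring
    · rw [h, one_mul]
  -- (1) total utility of R under πs equals |ER|
  have hsumu : ∑ j ∈ R, u j = (ER.card : ℝ) := by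
    have h1 : ∑ j ∈ R, u j = ∑ e, ∑ j ∈ R, πs j e := by
      simp only [hu, util]
      rw [Finset.sum_comm]
      exact Finset.sum_congr rfl fun e _ =>
        Finset.sum_congr rfl fun j _ => hvmul πs hπs j e
    have h2 : ∀ e, ∑ j ∈ R, πs j e = if e ∈ ER then 1 else 0 := by
      intro e
      by_cases he : e ∈ ER
      · rw [if_pos he]; exact hfull πs hπs e he
      · rw [if_neg he]
        apply Finset.sum_eq_zero
        intro j hj
        by_contra hne
        have hpos : 0 < πs j e := lt_of_le_of_ne (hπs.1 j e) (Ne.symm hne)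
        exact he (by
          simp only [hER, Finset.mem_filter, Finset.mem_univ, true_and]
          exact ⟨j, hj, hpos⟩)
    rw [h1, Finset.sum_congr rfl fun e _ => h2 e]
    simp [Finset.sum_ite_mem]
  -- (2) |ER| ≤ total utility of R under π₀
  have hsumw : (ER.card : ℝ) ≤ ∑ j ∈ R, util v π₀ j := by
    have h1 : ∑ j ∈ R, util v π₀ j = ∑ e, ∑ j ∈ R, π₀ j e := by
      simp only [util]
      rw [Finset.sum_comm]
      exact Finset.sum_congr rfl fun e _ =>
        Finset.sum_congr rfl fun j _ => hvmul π₀ hπ₀ j e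
    have h2 : ∑ e ∈ ER, ∑ j ∈ R, π₀ j e ≤ ∑ e, ∑ j ∈ R, π₀ j e :=
      Finset.sum_le_sum_of_subset_of_nonneg (Finset.subset_univ ER)
        (fun e _ _ => Finset.sum_nonneg fun j _ => hπ₀.1 j e)
    have h3 : ∑ e ∈ ER, ∑ j ∈ R, π₀ j e = (ER.card : ℝ) := by
      rw [Finset.sum_congr rfl fun e he => hfull π₀ hπ₀ e he]
      simp
    rw [h1]; rw [h3] at h2; exact h2
  -- (3) total utility of R under π₀ is at most |R|
  have hwcard : ∑ j ∈ R, util v π₀ j ≤ (R.card : ℝ) := by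
    calc ∑ j ∈ R, util v π₀ j ≤ ∑ _j ∈ R, (1:ℝ) := Finset.sum_le_sum fun j _ => hw j
    _ = (R.card : ℝ) := by simp
  -- (4) total utility of R under πs exceeds |R|
  have hstrict : (R.card : ℝ) < ∑ j ∈ R, u j := by
    have h1 : ∀ j ∈ R, 1 < u j := by
      intro j hj
      simp only [hR, Finset.mem_filter, Finset.mem_univ, true_and] at hj
      exact lt_of_lt_of_le hi0 (mono j hj)
    calc (R.card : ℝ) = ∑ _j ∈ R, (1:ℝ) := by simp
    _ < ∑ j ∈ R, u j := Finset.sum_lt_sum_of_nonempty ⟨i0, hi0R⟩ h1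
  linarith
end

section
/- Let (X,Y,Z;T) be a 3DM instance with |X|=|Y|=|Z|=n and T ⊆ X×Y×Z, and consider the fair-allocation instance constructed in the hardness reduction (agents s, s' for each s ∈ X∪Y∪Z and agents t, t^{(1)},…,t^{(4)} for each t ∈ T; n identical indivisible goods desired only by agents in T; divisible goods c_s desired by s, s' and c_t^{(1)},c_t^{(2)},c_t^{(3)} desired by t, t^{(1)},…,t^{(4)} and the three elements of t). Then the 3DM instance has a perfect matching if and only if there exists an allocation in which exactly n agents have utility 1 and all other agents have utility 3/5. -/
set_option linter.unusedSectionVars false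
set_option maxHeartbeats 1000000


open Finset Classical

/-- Ground elements of a 3DM instance. -/
abbrev Elem (X Y Z : Type*) := X ⊕ Y ⊕ Z

/-- Membership of a ground element in a triple. -/
def inTriple {X Y Z : Type*} (s : Elem X Y Z) (t : X × Y × Z) : Prop :=
  s = Sum.inl t.1 ∨ s = Sum.inr (Sum.inl t.2.1) ∨ s = Sum.inr (Sum.inr t.2.2)

/-- Agents of the reduction: `s` and `s'` for each ground element `s`, and
`t, t⁽¹⁾, t⁽²⁾, t⁽³⁾, t⁽⁴⁾` for each triple `t ∈ T` (the `t`-agent has index `0`). -/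
abbrev Agent (X Y Z : Type*) (T : Finset (X × Y × Z)) :=
  (Elem X Y Z ⊕ Elem X Y Z) ⊕ (↥T × Fin 5)

/-- Divisible goods of the reduction: `c_s` for each ground element `s` and
`c_t⁽¹⁾, c_t⁽²⁾, c_t⁽³⁾` for each triple `t ∈ T`. -/
abbrev DivGood (X Y Z : Type*) (T : Finset (X × Y × Z)) :=
  Elem X Y Z ⊕ (↥T × Fin 3)

/-- Which agents desire the (identical) indivisible goods: exactly the `t`-agents. -/
def valIndiv {X Y Z : Type*} {T : Finset (X × Y × Z)} (a : Agent X Y Z T) : Prop :=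
  ∃ t : ↥T, a = Sum.inr (t, 0)

/-- Which agent desires which divisible good. -/
def valDiv {X Y Z : Type*} {T : Finset (X × Y × Z)}
    (a : Agent X Y Z T) (g : DivGood X Y Z T) : Prop :=
  match a, g with
  | Sum.inl (Sum.inl s), Sum.inl s' => s = s'
  | Sum.inl (Sum.inr s), Sum.inl s' => s = s'
  | Sum.inl (Sum.inl s), Sum.inr p => inTriple s p.1.1
  | Sum.inl (Sum.inr _), Sum.inr _ => False
  | Sum.inr p, Sum.inr q => p.1 = q.1
  | Sum.inr _, Sum.inl _ => False

/-- An allocation: each of the `n` identical indivisible goods goes to an agent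
desiring it, and each divisible good is fully split among agents desiring it. -/
def IsAlloc {X Y Z : Type*} [Fintype X] [Fintype Y] [Fintype Z]
    {T : Finset (X × Y × Z)} {n : ℕ}
    (a : Fin n → Agent X Y Z T)
    (π : Agent X Y Z T → DivGood X Y Z T → ℝ) : Prop :=
  (∀ k, valIndiv (a k)) ∧ (∀ i g, 0 ≤ π i g) ∧
  (∀ g, ∑ i, π i g = 1) ∧ (∀ i g, ¬ valDiv i g → π i g = 0)

/-- The utility of an agent: number of indivisible goods received plus total
fraction of divisible goods received. -/
noncomputable def utilR {X Y Z : Type*} [Fintype X] [Fintype Y] [Fintype Z]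
    {T : Finset (X × Y × Z)} {n : ℕ}
    (a : Fin n → Agent X Y Z T)
    (π : Agent X Y Z T → DivGood X Y Z T → ℝ) (i : Agent X Y Z T) : ℝ :=
  ((Finset.univ.filter (fun k => a k = i)).card : ℝ) + ∑ g, π i g

/-- A perfect 3-dimensional matching. -/
def IsPM {X Y Z : Type*} (T T' : Finset (X × Y × Z)) : Prop :=
  T' ⊆ T ∧ (∀ x : X, ∃! t, t ∈ T' ∧ t.1 = x) ∧
  (∀ y : Y, ∃! t, t ∈ T' ∧ t.2.1 = y) ∧ (∀ z : Z, ∃! t, t ∈ T' ∧ t.2.2 = z)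

namespace Stmt16

variable {X Y Z : Type*} [Fintype X] [Fintype Y] [Fintype Z]
  [DecidableEq X] [DecidableEq Y] [DecidableEq Z]

def elems (p : X × Y × Z) : Finset (Elem X Y Z) :=
  {Sum.inl p.1, Sum.inr (Sum.inl p.2.1), Sum.inr (Sum.inr p.2.2)}

lemma mem_elems {s : Elem X Y Z} {p : X × Y × Z} : s ∈ elems p ↔ inTriple s p := by
  simp [elems, inTriple]

lemma card_elems (p : X × Y × Z) : (elems p).card = 3 := by
  simp [elems]

noncomputable def w (b : Bool) (j' : Fin 5) (j : Fin 3) : ℝ :=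
  match j with
  | 0 => if j' = 1 then 3/5 else if j' = 2 then 2/5 else 0
  | 1 => if j' = 2 then 1/5 else if j' = 3 then 3/5 else if j' = 4 then 1/5 else 0
  | 2 => if j' = 4 then 2/5 else if j' = 0 ∧ b = false then 3/5 else 0

lemma w_nonneg (b : Bool) (j' : Fin 5) (j : Fin 3) : 0 ≤ w b j' j := by
  fin_cases j <;> simp only [w] <;> split_ifs <;> norm_num

lemma w_col (b : Bool) (j : Fin 3) :
    ∑ j', w b j' j = if j = 2 ∧ b then 2/5 else 1 := by
  fin_cases j <;> cases b <;>
    simp [w, Fin.sum_univ_five] <;> norm_num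

lemma w_row (b : Bool) (j' : Fin 5) :
    ∑ j, w b j' j = if j' = 0 then (if b then 0 else 3/5) else 3/5 := by
  fin_cases j' <;> cases b <;>
    simp [w, Fin.sum_univ_three] <;> norm_num

variable {T : Finset (X × Y × Z)}

noncomputable def fpi (T : Finset (X × Y × Z)) (T' : Finset (X × Y × Z)) :
    Agent X Y Z T → DivGood X Y Z T → ℝ
  | Sum.inl (Sum.inl s), Sum.inl s' => if s = s' then 2/5 else 0
  | Sum.inl (Sum.inr s), Sum.inl s' => if s = s' then 3/5 else 0
  | Sum.inl (Sum.inl s), Sum.inr q =>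
      if (q.1 : X × Y × Z) ∈ T' ∧ q.2 = 2 ∧ s ∈ elems (q.1 : X × Y × Z) then 1/5 else 0
  | Sum.inl (Sum.inr _), Sum.inr _ => 0
  | Sum.inr p, Sum.inr q => if p.1 = q.1 then w (decide ((q.1 : X × Y × Z) ∈ T')) p.2 q.2 else 0
  | Sum.inr _, Sum.inl _ => 0

lemma fpi_nonneg (T' : Finset (X × Y × Z)) (i : Agent X Y Z T) (g : DivGood X Y Z T) :
    0 ≤ fpi T T' i g := by
  have hw := @w_nonneg
  rcases i with (s | s) | p <;> rcases g with s' | q <;>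
    simp only [fpi] <;> (try split_ifs) <;> norm_num [hw]

lemma fpi_not_val (T' : Finset (X × Y × Z)) (i : Agent X Y Z T) (g : DivGood X Y Z T)
    (h : ¬ valDiv i g) : fpi T T' i g = 0 := by
  rcases i with (s | s) | p <;> rcases g with s' | q <;>
    simp only [fpi, valDiv] at h ⊢
  · exact if_neg h
  · rw [if_neg]; rintro ⟨_, _, hs⟩; exact h (mem_elems.mp hs)
  · exact if_neg h
  · exact if_neg h

lemma fpi_sum_agents (T' : Finset (X × Y × Z)) (g : DivGood X Y Z T) :
    ∑ i, fpi T T' i g = 1 := by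
  rcases g with s0 | q
  · rw [Fintype.sum_sum_type, Fintype.sum_sum_type]
    have h1 : ∑ p : ↥T × Fin 5, fpi T T' (Sum.inr p) (Sum.inl s0) = 0 := by
      simp [fpi]
    have h2 : ∑ s, fpi T T' (Sum.inl (Sum.inl s)) (Sum.inl s0) = 2/5 := by
      simp [fpi]
    have h3 : ∑ s, fpi T T' (Sum.inl (Sum.inr s)) (Sum.inl s0) = 3/5 := by
      simp [fpi]
    rw [h1, h2, h3]; norm_num
  · rw [Fintype.sum_sum_type, Fintype.sum_sum_type]
    have h3 : ∑ s, fpi T T' (Sum.inl (Sum.inr s)) (Sum.inr q) = 0 := by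
      simp [fpi]
    have h2 : ∑ s, fpi T T' (Sum.inl (Sum.inl s)) (Sum.inr q)
        = if (q.1 : X × Y × Z) ∈ T' ∧ q.2 = 2 then 3/5 else 0 := by
      simp only [fpi]
      by_cases hm : (q.1 : X × Y × Z) ∈ T' ∧ q.2 = 2
      · rw [if_pos hm]
        have heach : ∀ s : Elem X Y Z,
            (if (q.1 : X × Y × Z) ∈ T' ∧ q.2 = 2 ∧ s ∈ elems (q.1 : X × Y × Z) then (1/5 : ℝ) else 0)
            = if s ∈ elems (q.1 : X × Y × Z) then (1/5 : ℝ) else 0 := by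
          intro s; by_cases hs : s ∈ elems (q.1 : X × Y × Z) <;>
            simp [hs, hm.1, hm.2]
        rw [Finset.sum_congr rfl fun s _ => heach s, Finset.sum_ite_mem,
          Finset.univ_inter, Finset.sum_const, card_elems]
        norm_num
      · rw [if_neg hm]
        refine Finset.sum_eq_zero fun s _ => ?_
        rw [if_neg]; rintro ⟨h1', h2', _⟩; exact hm ⟨h1', h2'⟩
    have h1 : ∑ p : ↥T × Fin 5, fpi T T' (Sum.inr p) (Sum.inr q)
        = if q.2 = 2 ∧ (q.1 : X × Y × Z) ∈ T' then 2/5 else 1 := by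
      rw [Fintype.sum_prod_type]
      simp only [fpi]
      have heach : ∀ t : ↥T,
          ∑ j' : Fin 5, (if t = q.1 then w (decide ((q.1 : X × Y × Z) ∈ T')) j' q.2 else 0)
          = if t = q.1 then (if q.2 = 2 ∧ (q.1 : X × Y × Z) ∈ T' then (2/5 : ℝ) else 1) else 0 := by
        intro t
        by_cases ht : t = q.1
        · have hj : ∀ j' : Fin 5,
              (if t = q.1 then w (decide ((q.1 : X × Y × Z) ∈ T')) j' q.2 else 0)
              = w (decide ((q.1 : X × Y × Z) ∈ T')) j' q.2 := fun j' => if_pos ht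
          rw [Finset.sum_congr rfl fun j' _ => hj j', w_col, if_pos ht]
          by_cases hm : (q.1 : X × Y × Z) ∈ T' <;> simp [hm]
        · simp [ht]
      rw [Finset.sum_congr rfl fun t _ => heach t]
      simp
    rw [h3, h2, h1]
    by_cases hm : (q.1 : X × Y × Z) ∈ T' <;> by_cases hq : q.2 = 2 <;>
      simp [hm, hq] <;> norm_num

lemma sum_unique {α : Type*} [Fintype α] {Q : α → Prop} (h : ∃! t, Q t)
    {f : α → ℝ} {c : ℝ} (hf : ∀ t, Q t → f t = c) (hf0 : ∀ t, ¬ Q t → f t = 0) :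
    ∑ t, f t = c := by
  obtain ⟨t0, ht0, hu⟩ := h
  refine (Finset.sum_eq_single_of_mem t0 (Finset.mem_univ _) ?_).trans (hf t0 ht0)
  intro t _ ht
  exact hf0 t fun hQ => ht (hu t hQ)

lemma existsUnique_subtype {T T' : Finset (X × Y × Z)} (hsub : T' ⊆ T) {P : X × Y × Z → Prop}
    (h : ∃! p, p ∈ T' ∧ P p) : ∃! t : ↥T, (t : X × Y × Z) ∈ T' ∧ P (t : X × Y × Z) := by
  obtain ⟨p, hp, hu⟩ := h
  exact ⟨⟨p, hsub hp.1⟩, hp, fun t ht => Subtype.ext (hu _ ht)⟩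

lemma fpi_sum_goods_s (hPM : IsPM T T') (s : Elem X Y Z) :
    ∑ g, fpi T T' (Sum.inl (Sum.inl s)) g = 3/5 := by
  rw [Fintype.sum_sum_type]
  have h1 : ∑ s', fpi T T' (Sum.inl (Sum.inl s)) (Sum.inl s') = 2/5 := by
    simp [fpi]
  have h2 : ∑ q : ↥T × Fin 3, fpi T T' (Sum.inl (Sum.inl s)) (Sum.inr q) = 1/5 := by
    rw [Fintype.sum_prod_type]
    simp only [fpi]
    have heach : ∀ t : ↥T,
        ∑ j : Fin 3, (if (t : X × Y × Z) ∈ T' ∧ j = 2 ∧ s ∈ elems (t : X × Y × Z) then (1/5:ℝ) else 0)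
        = if (t : X × Y × Z) ∈ T' ∧ s ∈ elems (t : X × Y × Z) then (1/5:ℝ) else 0 := by
      intro t
      by_cases h : (t : X × Y × Z) ∈ T' ∧ s ∈ elems (t : X × Y × Z)
      · rw [if_pos h, Fin.sum_univ_three]
        simp [h.1, h.2]
      · rw [if_neg h]
        refine Finset.sum_eq_zero fun j _ => if_neg ?_
        rintro ⟨ha, _, hb⟩; exact h ⟨ha, hb⟩
    rw [Finset.sum_congr rfl fun t _ => heach t]
    refine sum_unique (existsUnique_subtype hPM.1 (P := fun p => s ∈ elems p) ?_)
      (fun t ht => if_pos ht) (fun t ht => if_neg ht)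
    rcases s with x | y | z
    · obtain ⟨t0, ht0, hu⟩ := hPM.2.1 x
      refine ⟨t0, ⟨ht0.1, by simp [elems, ht0.2]⟩, ?_⟩
      intro p hp
      refine hu p ⟨hp.1, ?_⟩
      have := hp.2
      simp only [elems, Finset.mem_insert, Finset.mem_singleton] at this
      rcases this with h | h | h
      · exact (Sum.inl.inj h).symm
      · exact absurd h (by simp)
      · exact absurd h (by simp)
    · obtain ⟨t0, ht0, hu⟩ := hPM.2.2.1 y
      refine ⟨t0, ⟨ht0.1, by simp [elems, ht0.2]⟩, ?_⟩
      intro p hp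
      refine hu p ⟨hp.1, ?_⟩
      have := hp.2
      simp only [elems, Finset.mem_insert, Finset.mem_singleton] at this
      rcases this with h | h | h
      · exact absurd h (by simp)
      · exact (Sum.inl.inj (Sum.inr.inj h)).symm
      · exact absurd h (by simp)
    · obtain ⟨t0, ht0, hu⟩ := hPM.2.2.2 z
      refine ⟨t0, ⟨ht0.1, by simp [elems, ht0.2]⟩, ?_⟩
      intro p hp
      refine hu p ⟨hp.1, ?_⟩
      have := hp.2
      simp only [elems, Finset.mem_insert, Finset.mem_singleton] at this
      rcases this with h | h | h
      · exact absurd h (by simp)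
      · exact absurd h (by simp)
      · exact (Sum.inr.inj (Sum.inr.inj h)).symm
  rw [h1, h2]; norm_num

lemma fpi_sum_goods_s' (T' : Finset (X × Y × Z)) (s : Elem X Y Z) :
    ∑ g, fpi T T' (Sum.inl (Sum.inr s)) g = 3/5 := by
  rw [Fintype.sum_sum_type]
  simp [fpi]

lemma fpi_sum_goods_t (T' : Finset (X × Y × Z)) (p : ↥T × Fin 5) :
    ∑ g, fpi T T' (Sum.inr p) g
      = if p.2 = 0 then (if (p.1 : X × Y × Z) ∈ T' then 0 else 3/5) else 3/5 := by
  rw [Fintype.sum_sum_type]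
  have h1 : ∑ s', fpi T T' (Sum.inr p) (Sum.inl s') = 0 := by simp [fpi]
  have h2 : ∑ q : ↥T × Fin 3, fpi T T' (Sum.inr p) (Sum.inr q)
      = if p.2 = 0 then (if (p.1 : X × Y × Z) ∈ T' then 0 else 3/5) else 3/5 := by
    rw [Fintype.sum_prod_type]
    simp only [fpi]
    have heach : ∀ t : ↥T,
        ∑ j : Fin 3, (if p.1 = t then w (decide ((t : X × Y × Z) ∈ T')) p.2 j else 0)
        = if p.1 = t then (if p.2 = 0 then (if (p.1 : X × Y × Z) ∈ T' then (0:ℝ) else 3/5) else 3/5) else 0 := by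
      intro t
      by_cases ht : p.1 = t
      · have hj : ∀ j : Fin 3,
            (if p.1 = t then w (decide ((t : X × Y × Z) ∈ T')) p.2 j else 0)
            = w (decide ((t : X × Y × Z) ∈ T')) p.2 j := fun j => if_pos ht
        rw [Finset.sum_congr rfl fun j _ => hj j, w_row, if_pos ht]
        by_cases hm : ((p.1 : X × Y × Z) ∈ T') <;> by_cases h0 : p.2 = 0 <;>
          simp [hm, h0, ht]
      · simp [ht]
    rw [Finset.sum_congr rfl fun t _ => heach t]
    exact (Finset.sum_eq_single_of_mem p.1 (Finset.mem_univ _)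
      (fun t _ ht => if_neg fun hc => ht hc.symm)).trans (if_pos rfl)
  rw [h1, h2]; norm_num

lemma forward {n : ℕ} {T' : Finset (X × Y × Z)} (hPM : IsPM T T') (hcard : T'.card = n) :
    ∃ (a : Fin n → Agent X Y Z T) (π : Agent X Y Z T → DivGood X Y Z T → ℝ),
      IsAlloc a π ∧
      (Finset.univ.filter (fun i => utilR a π i = 1)).card = n ∧
      (∀ i : Agent X Y Z T, utilR a π i ≠ 1 → utilR a π i = 3 / 5) := by
  have e : ↥T' ≃ Fin n := T'.equivFinOfCardEq hcard
  set a : Fin n → Agent X Y Z T :=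
    fun k => Sum.inr (⟨((e.symm k : ↥T') : X × Y × Z), hPM.1 (e.symm k).2⟩, 0) with ha
  have hainj : Function.Injective a := by
    intro k k' h
    simp only [ha, Sum.inr.injEq, Prod.mk.injEq, Subtype.mk.injEq] at h
    exact e.symm.injective (Subtype.ext h.1)
  have hmem : ∀ i : Agent X Y Z T,
      (∃ k, a k = i) ↔ ∃ t : ↥T, i = Sum.inr (t, 0) ∧ (t : X × Y × Z) ∈ T' := by
    intro i
    constructor
    · rintro ⟨k, rfl⟩
      exact ⟨_, rfl, (e.symm k).2⟩
    · rintro ⟨t, rfl, htm⟩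
      refine ⟨e ⟨(t : X × Y × Z), htm⟩, ?_⟩
      simp only [ha, Equiv.symm_apply_apply]
  have hcount1 : ∀ k, (Finset.univ.filter (fun k' => a k' = a k)).card = 1 := by
    intro k
    rw [Finset.card_eq_one]
    refine ⟨k, ?_⟩
    ext k'
    simp [hainj.eq_iff]
  have hutil : ∀ i, utilR a (fpi T T') i = if ∃ k, a k = i then 1 else 3/5 := by
    intro i
    by_cases hex : ∃ k, a k = i
    · obtain ⟨k, rfl⟩ := hex
      rw [if_pos ⟨k, rfl⟩]
      unfold utilR
      rw [Finset.filter_congr_decidable, hcount1 k]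
      have hgoal : ∑ g, fpi T T' (a k) g = 0 := by
        rw [ha]
        rw [fpi_sum_goods_t T' (⟨((e.symm k : ↥T') : X × Y × Z), hPM.1 (e.symm k).2⟩, 0)]
        simp [(e.symm k).2]
      rw [hgoal]
      norm_num
    · rw [if_neg hex]
      have hc0 : (Finset.univ.filter (fun k' => a k' = i)).card = 0 := by
        rw [Finset.card_eq_zero, Finset.filter_eq_empty_iff]
        exact fun k _ h => hex ⟨k, h⟩
      unfold utilR
      rw [Finset.filter_congr_decidable, hc0]
      rcases i with (s | s) | p
      · rw [fpi_sum_goods_s hPM s]; norm_num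
      · rw [fpi_sum_goods_s' T' s]; norm_num
      · rw [fpi_sum_goods_t T' p]
        have hnot : ¬ (p.2 = 0 ∧ (p.1 : X × Y × Z) ∈ T') := by
          rintro ⟨h0, hm⟩
          exact hex ((hmem _).mpr ⟨p.1, by rw [show p = (p.1, (0 : Fin 5)) from Prod.ext rfl h0], hm⟩)
        by_cases h0 : p.2 = 0
        · rw [if_pos h0, if_neg fun hm => hnot ⟨h0, hm⟩]; norm_num
        · rw [if_neg h0]; norm_num
  refine ⟨a, fpi T T', ⟨fun k => ⟨_, rfl⟩, fpi_nonneg T', fpi_sum_agents T', fpi_not_val T'⟩, ?_, ?_⟩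
  · have hfilter : Finset.univ.filter (fun i => utilR a (fpi T T') i = 1) = Finset.univ.image a := by
      ext i
      simp only [Finset.mem_filter, Finset.mem_univ, true_and, Finset.mem_image, hutil i]
      by_cases hex : ∃ k, a k = i
      · simpa [hex] using hex
      · rw [if_neg hex]
        simp only [hex, iff_false]
        norm_num
    rw [hfilter, Finset.card_image_of_injective _ hainj, Finset.card_univ, Fintype.card_fin]
  · intro i hi
    rw [hutil i] at hi ⊢
    by_cases hex : ∃ k, a k = i
    · exact absurd (if_pos hex) hi
    · rw [if_neg hex]

lemma backward {n : ℕ} (hX : Fintype.card X = n) (hY : Fintype.card Y = n)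
    (hZ : Fintype.card Z = n)
    {a : Fin n → Agent X Y Z T} {π : Agent X Y Z T → DivGood X Y Z T → ℝ}
    (hA : IsAlloc a π)
    (hcard : (Finset.univ.filter (fun i => utilR a π i = 1)).card = n)
    (hoth : ∀ i, utilR a π i ≠ 1 → utilR a π i = 3/5) :
    ∃ T', IsPM T T' := by
  obtain ⟨hval, hpos, hsum, hzero⟩ := hA
  set count : Agent X Y Z T → ℕ :=
    fun i => (Finset.univ.filter (fun k => a k = i)).card with hcnt
  have hutil_eq : ∀ i, utilR a π i = (count i : ℝ) + ∑ g, π i g := by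
    intro i
    unfold utilR
    rw [Finset.filter_congr_decidable]
  have hsum_nonneg : ∀ i, 0 ≤ ∑ g, π i g :=
    fun i => Finset.sum_nonneg fun g _ => hpos i g
  have hle : ∀ i, utilR a π i ≤ 1 := by
    intro i
    by_cases h : utilR a π i = 1
    · exact le_of_eq h
    · rw [hoth i h]; norm_num
  have hcount_le1 : ∀ i, count i ≤ 1 := by
    intro i
    have h1 : (count i : ℝ) ≤ 1 := by
      have h2 := hle i
      rw [hutil_eq i] at h2
      linarith [hsum_nonneg i]
    exact_mod_cast h1
  have hainj : Function.Injective a := by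
    intro k k' h
    have h1 : k ∈ Finset.univ.filter (fun j => a j = a k') := by simp [h]
    have h2 : k' ∈ Finset.univ.filter (fun j => a j = a k') := by simp
    exact Finset.card_le_one.mp (hcount_le1 (a k')) k h1 k' h2
  set B := Finset.univ.image a with hB
  have hBcard : B.card = n := by
    rw [hB, Finset.card_image_of_injective _ hainj, Finset.card_univ, Fintype.card_fin]
  have hc1 : ∀ k, 1 ≤ count (a k) :=
    fun k => Finset.card_pos.mpr ⟨k, by simp⟩
  have hButil : ∀ i ∈ B, utilR a π i = 1 := by
    intro i hi
    obtain ⟨k, _, rfl⟩ := Finset.mem_image.mp hi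
    have h1R : (1:ℝ) ≤ count (a k) := by exact_mod_cast hc1 k
    have h2 := hle (a k)
    rw [hutil_eq (a k)] at h2 ⊢
    linarith [hsum_nonneg (a k)]
  have hBfilter : B = Finset.univ.filter (fun i => utilR a π i = 1) := by
    apply Finset.eq_of_subset_of_card_le
    · intro i hi
      simp only [Finset.mem_filter, Finset.mem_univ, true_and]
      exact hButil i hi
    · rw [hcard, hBcard]
  have hπB0 : ∀ i ∈ B, ∀ g, π i g = 0 := by
    intro i hi
    have h1 := hButil i hi
    obtain ⟨k, _, rfl⟩ := Finset.mem_image.mp hi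
    have h1R : (1:ℝ) ≤ count (a k) := by exact_mod_cast hc1 k
    rw [hutil_eq (a k)] at h1
    have hS0 : ∑ g, π (a k) g = 0 := by linarith [hsum_nonneg (a k)]
    intro g
    exact (Finset.sum_eq_zero_iff_of_nonneg (fun g _ => hpos (a k) g)).mp hS0 g (Finset.mem_univ g)
  have hπnB : ∀ i ∉ B, ∑ g, π i g = 3/5 := by
    intro i hi
    have hc0 : count i = 0 := by
      rw [hcnt]
      rw [Finset.card_eq_zero, Finset.filter_eq_empty_iff]
      exact fun k _ hk => hi (Finset.mem_image.mpr ⟨k, Finset.mem_univ k, hk⟩)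
    have hne : utilR a π i ≠ 1 := by
      intro h
      exact hi (hBfilter ▸ Finset.mem_filter.mpr ⟨Finset.mem_univ i, h⟩)
    have h3 := hoth i hne
    rw [hutil_eq i, hc0] at h3
    simpa using h3
  -- key non-conflict lemma
  have key : ∀ t₁ t₂ : ↥T, Sum.inr (t₁, (0:Fin 5)) ∈ B → Sum.inr (t₂, (0:Fin 5)) ∈ B →
      t₁ ≠ t₂ → ∀ s : Elem X Y Z,
      s ∈ elems (t₁ : X × Y × Z) → s ∈ elems (t₂ : X × Y × Z) → False := by
    intro t₁ t₂ hB1 hB2 hne s hs1 hs2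
    set E : Finset (Elem X Y Z) := elems (t₁ : X × Y × Z) ∪ elems (t₂ : X × Y × Z) with hE
    have hE5 : E.card ≤ 5 := by
      have h1 : E.card + (elems (t₁ : X × Y × Z) ∩ elems (t₂ : X × Y × Z)).card = 3 + 3 := by
        rw [hE, Finset.card_union_add_card_inter, card_elems, card_elems]
      have h2 : 1 ≤ (elems (t₁ : X × Y × Z) ∩ elems (t₂ : X × Y × Z)).card :=
        Finset.card_pos.mpr ⟨s, Finset.mem_inter.mpr ⟨hs1, hs2⟩⟩
      omega
    set S : Finset (DivGood X Y Z T) :=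
      E.image Sum.inl ∪
        (({t₁, t₂} : Finset ↥T) ×ˢ (Finset.univ : Finset (Fin 3))).image Sum.inr with hS
    have hScard : S.card = E.card + 6 := by
      rw [hS, Finset.card_union_of_disjoint]
      · rw [Finset.card_image_of_injective _ Sum.inl_injective,
          Finset.card_image_of_injective _ Sum.inr_injective, Finset.card_product,
          Finset.card_pair hne]
        simp
      · simp [Finset.disjoint_left]
    set A : Finset (Agent X Y Z T) :=
      (E.image (fun u => Sum.inl (Sum.inl u)) ∪ E.image (fun u => Sum.inl (Sum.inr u))) ∪
        (({t₁, t₂} : Finset ↥T) ×ˢ (Finset.univ : Finset (Fin 5))).image Sum.inr with hA2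
    have hAcard : A.card ≤ 2 * E.card + 10 := by
      have h1 := Finset.card_union_le
        (E.image (fun u : Elem X Y Z => (Sum.inl (Sum.inl u) : Agent X Y Z T)))
        (E.image (fun u : Elem X Y Z => (Sum.inl (Sum.inr u) : Agent X Y Z T)))
      have h2 := Finset.card_union_le
        ((E.image (fun u : Elem X Y Z => (Sum.inl (Sum.inl u) : Agent X Y Z T))) ∪
          E.image (fun u : Elem X Y Z => (Sum.inl (Sum.inr u) : Agent X Y Z T)))
        ((({t₁, t₂} : Finset ↥T) ×ˢ (Finset.univ : Finset (Fin 5))).image Sum.inr)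
      have h3 := Finset.card_image_le
        (s := E) (f := fun u : Elem X Y Z => (Sum.inl (Sum.inl u) : Agent X Y Z T))
      have h4 := Finset.card_image_le
        (s := E) (f := fun u : Elem X Y Z => (Sum.inl (Sum.inr u) : Agent X Y Z T))
      have h5 := Finset.card_image_le
        (s := (({t₁, t₂} : Finset ↥T) ×ˢ (Finset.univ : Finset (Fin 5))))
        (f := (Sum.inr : ↥T × Fin 5 → Agent X Y Z T))
      have h6 : (({t₁, t₂} : Finset ↥T) ×ˢ (Finset.univ : Finset (Fin 5))).card = 10 := by
        rw [Finset.card_product, Finset.card_pair hne]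
        simp
      rw [hA2]
      omega
    have hcover : ∀ i, i ∉ A → ∀ g ∈ S, π i g = 0 := by
      intro i hiA g hgS
      rcases Finset.mem_union.mp hgS with hg | hg
      · obtain ⟨u', hu', rfl⟩ := Finset.mem_image.mp hg
        rcases i with (u | u) | p
        · by_cases hv : valDiv (Sum.inl (Sum.inl u) : Agent X Y Z T) (Sum.inl u')
          · exfalso
            apply hiA
            have huu : u = u' := hv
            rw [hA2]
            exact Finset.mem_union_left _ (Finset.mem_union_left _
              (Finset.mem_image.mpr ⟨u, huu ▸ hu', rfl⟩))
          · exact hzero _ _ hv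
        · by_cases hv : valDiv (Sum.inl (Sum.inr u) : Agent X Y Z T) (Sum.inl u')
          · exfalso
            apply hiA
            have huu : u = u' := hv
            rw [hA2]
            exact Finset.mem_union_left _ (Finset.mem_union_right _
              (Finset.mem_image.mpr ⟨u, huu ▸ hu', rfl⟩))
          · exact hzero _ _ hv
        · exact hzero _ _ (fun h => h.elim)
      · obtain ⟨⟨t', j⟩, hq, rfl⟩ := Finset.mem_image.mp hg
        have ht' : t' ∈ ({t₁, t₂} : Finset ↥T) := (Finset.mem_product.mp hq).1
        rcases i with (u | u) | p
        · by_cases hv : valDiv (Sum.inl (Sum.inl u) : Agent X Y Z T) (Sum.inr (t', j))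
          · exfalso
            apply hiA
            have huu : inTriple u (t' : X × Y × Z) := hv
            have huE : u ∈ E := by
              rw [hE]
              rcases Finset.mem_insert.mp ht' with h | h
              · exact Finset.mem_union_left _ (by rw [← h] at *; exact mem_elems.mpr huu)
              · have h' : t' = t₂ := Finset.mem_singleton.mp h
                exact Finset.mem_union_right _ (by rw [← h'] at *; exact mem_elems.mpr huu)
            rw [hA2]
            exact Finset.mem_union_left _ (Finset.mem_union_left _
              (Finset.mem_image.mpr ⟨u, huE, rfl⟩))
          · exact hzero _ _ hv
        · exact hzero _ _ (fun h => h.elim)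
        · by_cases hv : valDiv (Sum.inr p : Agent X Y Z T) (Sum.inr (t', j))
          · exfalso
            apply hiA
            have hp1 : p.1 = t' := hv
            rw [hA2]
            refine Finset.mem_union_right _ (Finset.mem_image.mpr ⟨p, ?_, rfl⟩)
            exact Finset.mem_product.mpr ⟨hp1 ▸ ht', Finset.mem_univ _⟩
          · exact hzero _ _ hv
    have hkey1 : ((S.card : ℝ)) = ∑ i ∈ A, ∑ g ∈ S, π i g := by
      calc (S.card : ℝ) = ∑ _g ∈ S, (1 : ℝ) := by
            rw [Finset.sum_const, nsmul_eq_mul, mul_one]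
        _ = ∑ g ∈ S, ∑ i, π i g := Finset.sum_congr rfl fun g _ => (hsum g).symm
        _ = ∑ i, ∑ g ∈ S, π i g := Finset.sum_comm
        _ = ∑ i ∈ A, ∑ g ∈ S, π i g :=
            (Finset.sum_subset (Finset.subset_univ A)
              (fun i _ hi => Finset.sum_eq_zero fun g hg => hcover i hi g hg)).symm
    have hbound : ∑ i ∈ A, ∑ g ∈ S, π i g ≤ ((A \ B).card : ℝ) * (3/5) := by
      have h1 : ∀ i ∈ A, ∑ g ∈ S, π i g ≤ (if i ∈ B then (0:ℝ) else 3/5) := by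
        intro i _
        have hle2 : ∑ g ∈ S, π i g ≤ ∑ g, π i g :=
          Finset.sum_le_sum_of_subset_of_nonneg (Finset.subset_univ S)
            (fun g _ _ => hpos i g)
        by_cases hiB : i ∈ B
        · rw [if_pos hiB]
          have : ∑ g, π i g = 0 := Finset.sum_eq_zero fun g _ => hπB0 i hiB g
          linarith
        · rw [if_neg hiB]
          have := hπnB i hiB
          linarith
      calc ∑ i ∈ A, ∑ g ∈ S, π i g ≤ ∑ i ∈ A, (if i ∈ B then (0:ℝ) else 3/5) :=
            Finset.sum_le_sum h1
        _ = ∑ i ∈ A \ B, (if i ∈ B then (0:ℝ) else 3/5) :=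
            (Finset.sum_subset Finset.sdiff_subset (fun i hiA hiNB => if_pos (by
              by_contra hB'
              exact hiNB (Finset.mem_sdiff.mpr ⟨hiA, hB'⟩)))).symm
        _ = ((A \ B).card : ℝ) * (3/5) :=
            (Finset.sum_congr rfl (fun i hi => if_neg (Finset.mem_sdiff.mp hi).2)).trans
              (by rw [Finset.sum_const, nsmul_eq_mul])
    have hABcard : (A \ B).card + 2 ≤ A.card := by
      have hsub2 : ({Sum.inr (t₁, (0:Fin 5)), Sum.inr (t₂, (0:Fin 5))} :
          Finset (Agent X Y Z T)) ⊆ A ∩ B := by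
        intro i hi
        rcases Finset.mem_insert.mp hi with h | h
        · subst h
          refine Finset.mem_inter.mpr ⟨?_, hB1⟩
          rw [hA2]
          refine Finset.mem_union_right _ (Finset.mem_image.mpr ⟨(t₁, 0), ?_, rfl⟩)
          exact Finset.mem_product.mpr ⟨Finset.mem_insert_self _ _, Finset.mem_univ _⟩
        · have h' := Finset.mem_singleton.mp h
          subst h'
          refine Finset.mem_inter.mpr ⟨?_, hB2⟩
          rw [hA2]
          refine Finset.mem_union_right _ (Finset.mem_image.mpr ⟨(t₂, 0), ?_, rfl⟩)
          exact Finset.mem_product.mpr ⟨by simp, Finset.mem_univ _⟩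
      have hne2 : (Sum.inr (t₁, (0:Fin 5)) : Agent X Y Z T) ≠ Sum.inr (t₂, (0:Fin 5)) := by
        intro h
        apply hne
        have := Sum.inr.inj h
        exact (Prod.ext_iff.mp this).1
      have h2 : 2 ≤ (A ∩ B).card := by
        have hcc := Finset.card_le_card hsub2
        rwa [Finset.card_pair hne2] at hcc
      have h3 := Finset.card_sdiff_add_card_inter A B
      omega
    have hAB8 : (A \ B).card ≤ 2 * E.card + 8 := by omega
    have hABR : ((A \ B).card : ℝ) ≤ 2 * (E.card : ℝ) + 8 := by exact_mod_cast hAB8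
    have hE5R : (E.card : ℝ) ≤ 5 := by exact_mod_cast hE5
    have hcardR : (E.card : ℝ) + 6 ≤ ((A \ B).card : ℝ) * (3/5) := by
      calc (E.card : ℝ) + 6 = (S.card : ℝ) := by rw [hScard]; push_cast; ring
        _ = ∑ i ∈ A, ∑ g ∈ S, π i g := hkey1
        _ ≤ _ := hbound
    linarith
  -- construct the matching
  have hval' : ∀ k, ∃ t : ↥T, a k = Sum.inr (t, 0) := hval
  choose f hfspec using hval'
  have hfinj : Function.Injective f := by
    intro k k' h
    apply hainj
    rw [hfspec k, hfspec k', h]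
  have hFinj : Function.Injective (fun k => ((f k : X × Y × Z))) := by
    intro k k' h
    exact hfinj (Subtype.ext h)
  set M : Finset (X × Y × Z) := Finset.univ.image (fun k => ((f k : X × Y × Z))) with hM
  have hMT : M ⊆ T := by
    intro p hp
    obtain ⟨k, _, rfl⟩ := Finset.mem_image.mp hp
    exact (f k).2
  have hMcard : M.card = n := by
    rw [hM, Finset.card_image_of_injective _ hFinj, Finset.card_univ, Fintype.card_fin]
  have hMB : ∀ p (hp : p ∈ M) (h : p ∈ T),
      (Sum.inr ((⟨p, h⟩ : ↥T), (0:Fin 5)) : Agent X Y Z T) ∈ B := by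
    intro p hp h
    obtain ⟨k, _, rfl⟩ := Finset.mem_image.mp hp
    have heq : (⟨((f k : X × Y × Z)), h⟩ : ↥T) = f k := Subtype.ext rfl
    rw [heq, hB]
    exact Finset.mem_image.mpr ⟨k, Finset.mem_univ k, hfspec k⟩
  have hMinj : ∀ s : Elem X Y Z, ∀ p ∈ M, ∀ q ∈ M,
      s ∈ elems p → s ∈ elems q → p = q := by
    intro s p hp q hq hsp hsq
    by_contra hnepq
    have h1 : (⟨p, hMT hp⟩ : ↥T) ≠ ⟨q, hMT hq⟩ :=
      fun h => hnepq (congrArg Subtype.val h)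
    exact key _ _ (hMB p hp _) (hMB q hq _) h1 s hsp hsq
  refine ⟨M, hMT, ?_, ?_, ?_⟩
  · -- X coordinate
    have hinj : Set.InjOn Prod.fst (M : Set (X × Y × Z)) := by
      intro p hp q hq h
      exact hMinj (Sum.inl p.1) p hp q hq (by simp [elems]) (by simp [elems, h])
    have himg : M.image Prod.fst = Finset.univ := by
      apply Finset.eq_univ_of_card
      rw [Finset.card_image_of_injOn hinj, hMcard, hX]
    intro x
    have hx : x ∈ M.image Prod.fst := himg ▸ Finset.mem_univ x
    obtain ⟨p, hp, hpx⟩ := Finset.mem_image.mp hx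
    refine ⟨p, ⟨hp, hpx⟩, ?_⟩
    intro q hq
    exact hMinj (Sum.inl x) q hq.1 p hp (by simp [elems, hq.2]) (by simp [elems, hpx])
  · -- Y coordinate
    have hinj : Set.InjOn (fun p : X × Y × Z => p.2.1) (M : Set (X × Y × Z)) := by
      intro p hp q hq h
      exact hMinj (Sum.inr (Sum.inl p.2.1)) p hp q hq (by simp [elems])
        (by simp only at h; simp [elems, h])
    have himg : M.image (fun p => p.2.1) = Finset.univ := by
      apply Finset.eq_univ_of_card
      rw [Finset.card_image_of_injOn hinj, hMcard, hY]
    intro y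
    have hy : y ∈ M.image (fun p => p.2.1) := himg ▸ Finset.mem_univ y
    obtain ⟨p, hp, hpy⟩ := Finset.mem_image.mp hy
    refine ⟨p, ⟨hp, hpy⟩, ?_⟩
    intro q hq
    exact hMinj (Sum.inr (Sum.inl y)) q hq.1 p hp (by simp [elems, hq.2])
      (by simp [elems, hpy])
  · -- Z coordinate
    have hinj : Set.InjOn (fun p : X × Y × Z => p.2.2) (M : Set (X × Y × Z)) := by
      intro p hp q hq h
      exact hMinj (Sum.inr (Sum.inr p.2.2)) p hp q hq (by simp [elems])
        (by simp only at h; simp [elems, h])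
    have himg : M.image (fun p => p.2.2) = Finset.univ := by
      apply Finset.eq_univ_of_card
      rw [Finset.card_image_of_injOn hinj, hMcard, hZ]
    intro z
    have hz : z ∈ M.image (fun p => p.2.2) := himg ▸ Finset.mem_univ z
    obtain ⟨p, hp, hpz⟩ := Finset.mem_image.mp hz
    refine ⟨p, ⟨hp, hpz⟩, ?_⟩
    intro q hq
    exact hMinj (Sum.inr (Sum.inr z)) q hq.1 p hp (by simp [elems, hq.2])
      (by simp [elems, hpz])

end Stmt16

/-- the 3DM instance has a perfect matching iff the constructed
fair-allocation instance has an allocation in which exactly `n` agents have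
utility `1` and all other agents have utility `3/5`. -/
theorem stmt_16 {X Y Z : Type*} [Fintype X] [Fintype Y] [Fintype Z]
    [DecidableEq X] [DecidableEq Y] [DecidableEq Z]
    (n : ℕ) (hX : Fintype.card X = n) (hY : Fintype.card Y = n)
    (hZ : Fintype.card Z = n) (T : Finset (X × Y × Z)) :
    (∃ T', IsPM T T') ↔
      ∃ (a : Fin n → Agent X Y Z T) (π : Agent X Y Z T → DivGood X Y Z T → ℝ),
        IsAlloc a π ∧
        (Finset.univ.filter (fun i => utilR a π i = 1)).card = n ∧
        (∀ i : Agent X Y Z T, utilR a π i ≠ 1 → utilR a π i = 3 / 5) := by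
  constructor
  · rintro ⟨T', hPM⟩
    have hcard : T'.card = n := by
      have hinj : Set.InjOn Prod.fst (T' : Set (X × Y × Z)) := by
        intro p hp q hq h
        obtain ⟨t0, _, hu⟩ := hPM.2.1 p.1
        rw [hu p ⟨Finset.mem_coe.mp hp, rfl⟩, hu q ⟨Finset.mem_coe.mp hq, h.symm⟩]
      have himg : T'.image Prod.fst = Finset.univ := by
        apply Finset.eq_univ_of_forall
        intro x
        obtain ⟨t0, ht0, _⟩ := hPM.2.1 x
        exact Finset.mem_image.mpr ⟨t0, ht0.1, ht0.2⟩
      have hci := Finset.card_image_of_injOn hinj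
      rw [himg, Finset.card_univ, hX] at hci
      exact hci.symm
    exact Stmt16.forward hPM hcard
  · rintro ⟨a, π, hA, hcard, hoth⟩
    exact Stmt16.backward hX hY hZ hA hcard hoth
end
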